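/- arXiv:0812.2229 — 9 statements merged into one kernel-verified Lean document; each statement's English description precedes it below -/
import Mathlib

section
/- Let (𝔫, ⟨·,·⟩) be a nonabelian metric nilpotent Lie algebra and let B = {x_1, …, x_n} be an orthogonal basis with q_i = ⟨x_i, x_i⟩. Then for every i = 1, …, n, ric(x_i, x_i)/q_i = −(1/2) Σ_{(j,k,l) ∈ Λ_B} (q_l/(q_j q_k)) (α_{jk}^l)² (y_{jk}^l)_i; equivalently, the Ricci vector (ric(x_1,x_1)/q_1, …, ric(x_n,x_n)/q_n) equals −(1/2) aᵀ Y, where a is the structure vector and Y the root matrix of (𝔫, ⟨·,·⟩) relative to B. -/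
/-- Structure constants of a Lie algebra relative to a basis `b`:
`⁅b j, b k⁆ = ∑ l, structConst b j k l • b l`. -/
noncomputable def structConst {n : ℕ} {L : Type} [LieRing L] [LieAlgebra ℝ L]
    (b : Module.Basis (Fin n) ℝ L) (j k l : Fin n) : ℝ := b.repr ⁅b j, b k⁆ l

/-- The root vector `y_{jk}^l = e_j + e_k - e_l ∈ ℝⁿ`. -/
noncomputable def rootVector {n : ℕ} (j k l : Fin n) (i : Fin n) : ℝ :=
  (if i = j then (1:ℝ) else 0) + (if i = k then 1 else 0) - (if i = l then 1 else 0)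

/-- The dictionary order on index triples. -/
def dictLt {n : ℕ} (t t' : Fin n × Fin n × Fin n) : Prop :=
  t.1 < t'.1 ∨ (t.1 = t'.1 ∧ (t.2.1 < t'.2.1 ∨ (t.2.1 = t'.2.1 ∧ t.2.2 < t'.2.2)))

/-- `σ : Fin m → (Fin n)³` enumerates, in dictionary order, the set
`Λ_B = {(j,k,l) : α_{jk}^l ≠ 0, j < k}` of index triples of nonzero
structure constants of the Lie algebra relative to the basis `b`
(in particular `m = |Λ_B|`). -/
def IsEnumerationOfLambda {n m : ℕ} {L : Type} [LieRing L] [LieAlgebra ℝ L]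
    (b : Module.Basis (Fin n) ℝ L) (σ : Fin m → Fin n × Fin n × Fin n) : Prop :=
  (∀ t : Fin n × Fin n × Fin n,
      (t.1 < t.2.1 ∧ structConst b t.1 t.2.1 t.2.2 ≠ 0) ↔ (∃ r, σ r = t)) ∧
  (∀ r r' : Fin m, r < r' → dictLt (σ r) (σ r'))

/-- The `m × n` root matrix `Y`, whose `r`-th row is the root vector of the
`r`-th triple of `Λ_B`. -/
noncomputable def rootMatrix {n m : ℕ} (σ : Fin m → Fin n × Fin n × Fin n) :
    Matrix (Fin m) (Fin n) ℝ :=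
  Matrix.of fun r i => rootVector (σ r).1 (σ r).2.1 (σ r).2.2 i

/-- The `m × m` Gram matrix `U = Y Yᵀ`. -/
noncomputable def gramMatrix {n m : ℕ} (σ : Fin m → Fin n × Fin n × Fin n) :
    Matrix (Fin m) (Fin m) ℝ :=
  rootMatrix σ * (rootMatrix σ).transpose

/-- The structure vector: its `r`-th entry is `(q_l/(q_j q_k)) (α_{jk}^l)²`,
where `(j,k,l)` is the `r`-th triple of `Λ_B` and `q_i` are the diagonal
metric coefficients. -/
noncomputable def structVector {n m : ℕ} {L : Type} [LieRing L] [LieAlgebra ℝ L]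
    (b : Module.Basis (Fin n) ℝ L) (σ : Fin m → Fin n × Fin n × Fin n)
    (q : Fin n → ℝ) (r : Fin m) : ℝ :=
  q (σ r).2.2 / (q (σ r).1 * q (σ r).2.1) *
    (structConst b (σ r).1 (σ r).2.1 (σ r).2.2) ^ 2

/-- The Ricci form `ric(x,y) = -(1/2)⟨ad x, ad y⟩ + (1/4)⟨J x, J y⟩`, where the
inner product on endomorphisms is `⟨A, B⟩ = tr (A ∘ B*)`; it is expressed here
through a given adjoint operation `adj` (characterized by
`Q (adj A x) y = Q x (A y)`) and a given map `J` (characterized by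
`Q (J x y) z = Q x ⁅y, z⁆`). -/
noncomputable def ricForm {L : Type} [LieRing L] [LieAlgebra ℝ L]
    (adj : (L →ₗ[ℝ] L) → (L →ₗ[ℝ] L)) (J : L → L →ₗ[ℝ] L) (x y : L) : ℝ :=
  -(1/2) * LinearMap.trace ℝ L ((LieAlgebra.ad ℝ L x) ∘ₗ adj (LieAlgebra.ad ℝ L y))
    + (1/4) * LinearMap.trace ℝ L ((J x) ∘ₗ adj (J y))

/-!
Relative to an orthogonal basis, `tr (A B*) = Σ_k ⟨A x_k, B x_k⟩ / q_k`, so with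
`a_{jk}^l = (q_l/(q_j q_k)) (α_{jk}^l)²` both traces in `ric(x_i, x_i)` are sums of these weights:
`⟨ad_{x_i}, ad_{x_i}⟩ = q_i Σ_{k,l} a_{ik}^l` and `⟨J_{x_i}, J_{x_i}⟩ = q_i Σ_{j,k} a_{jk}^i`.
On the other side, `a_{jk}^l (y_{jk}^l)_i` is symmetric in `j, k` and vanishes when `j = k` or
`α_{jk}^l = 0`, so the sum over `Λ_B` is half the sum over all triples, namely
`Σ_{k,l} a_{ik}^l - (1/2) Σ_{j,k} a_{jk}^i`.
-/

open Finset

namespace LinearMap.IsOrthoᵢ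

section CommRing

variable {ι R M : Type*} [Fintype ι] [CommRing R] [AddCommGroup M] [Module R M]
  {Q : M →ₗ[R] M →ₗ[R] R} {b : Module.Basis ι R M}

theorem apply_basis_left (hb : Q.IsOrthoᵢ b) (l : ι) (x : M) :
    Q (b l) x = b.repr x l * Q (b l) (b l) := by
  conv_lhs => rw [← b.sum_repr x]
  rw [map_sum, sum_eq_single l]
  · rw [map_smul, smul_eq_mul]
  · intro j _ hj
    rw [map_smul, hb hj.symm, smul_zero]
  · exact fun h => absurd (mem_univ l) h

theorem apply_eq_sum (hb : Q.IsOrthoᵢ b) (x y : M) :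
    Q x y = ∑ l, b.repr x l * b.repr y l * Q (b l) (b l) := by
  conv_lhs => rw [← b.sum_repr x]
  simp only [map_sum, map_smul, LinearMap.sum_apply, LinearMap.smul_apply, smul_eq_mul]
  refine sum_congr rfl fun l _ => ?_
  rw [hb.apply_basis_left l y, mul_assoc]

end CommRing

variable {ι 𝕜 M : Type*} [Fintype ι] [Field 𝕜] [AddCommGroup M] [Module 𝕜 M]
  {Q : M →ₗ[𝕜] M →ₗ[𝕜] 𝕜} {b : Module.Basis ι 𝕜 M}

theorem repr_eq_div (hb : Q.IsOrthoᵢ b) {l : ι} (hl : Q (b l) (b l) ≠ 0) (x : M) :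
    b.repr x l = Q (b l) x / Q (b l) (b l) :=
  eq_div_of_mul_eq hl (hb.apply_basis_left l x).symm

theorem trace_comp_eq_sum (hb : Q.IsOrthoᵢ b) (hQ : ∀ x y, Q x y = Q y x)
    (hq : ∀ k, Q (b k) (b k) ≠ 0) {A B B' : M →ₗ[𝕜] M} (hB' : ∀ x y, Q (B' x) y = Q x (B y)) :
    LinearMap.trace 𝕜 M (A ∘ₗ B') = ∑ k, Q (A (b k)) (B (b k)) / Q (b k) (b k) := by
  classical
  have : Module.Finite 𝕜 M := Module.Finite.of_basis b
  rw [LinearMap.trace_comp_comm', LinearMap.trace_eq_matrix_trace 𝕜 b, Matrix.trace]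
  refine sum_congr rfl fun k _ => ?_
  rw [Matrix.diag_apply, LinearMap.toMatrix_apply, LinearMap.comp_apply, hb.repr_eq_div (hq k),
    hQ, hB']

end LinearMap.IsOrthoᵢ

section StructConst

variable {n : ℕ} {L : Type} [LieRing L] [LieAlgebra ℝ L] (b : Module.Basis (Fin n) ℝ L)

theorem structConst_swap (j k l : Fin n) : structConst b k j l = -structConst b j k l := by
  rw [structConst, structConst, ← lie_skew, map_neg, Finsupp.neg_apply]

theorem structConst_self (j l : Fin n) : structConst b j j l = 0 := by
  simp [structConst]

noncomputable def structWeight (q : Fin n → ℝ) (j k l : Fin n) : ℝ :=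
  q l / (q j * q k) * structConst b j k l ^ 2

theorem structWeight_swap (q : Fin n → ℝ) (j k l : Fin n) :
    structWeight b q k j l = structWeight b q j k l := by
  simp only [structWeight, structConst_swap b j k l, neg_sq, mul_comm (q k)]

end StructConst

section Ricci

variable {n : ℕ} {L : Type} [LieRing L] [LieAlgebra ℝ L] {Q : L →ₗ[ℝ] L →ₗ[ℝ] ℝ}
  {b : Module.Basis (Fin n) ℝ L}

theorem trace_ad_comp_adjoint_ad (hQsymm : ∀ x y, Q x y = Q y x)
    (hq : ∀ k, Q (b k) (b k) ≠ 0) (hb : Q.IsOrthoᵢ b) {adj : (L →ₗ[ℝ] L) → (L →ₗ[ℝ] L)}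
    (hadj : ∀ (A : L →ₗ[ℝ] L) (x y : L), Q (adj A x) y = Q x (A y)) (i : Fin n) :
    LinearMap.trace ℝ L (LieAlgebra.ad ℝ L (b i) ∘ₗ adj (LieAlgebra.ad ℝ L (b i)))
      = Q (b i) (b i) * ∑ k, ∑ l, structWeight b (fun i' => Q (b i') (b i')) i k l := by
  rw [hb.trace_comp_eq_sum hQsymm hq (hadj _), mul_sum]
  refine sum_congr rfl fun k _ => ?_
  rw [hb.apply_eq_sum, sum_div, mul_sum]
  refine sum_congr rfl fun l _ => ?_
  have hqi := hq i
  simp only [LieAlgebra.ad_apply, structWeight, structConst]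
  field_simp

theorem repr_J_basis (hQsymm : ∀ x y, Q x y = Q y x) (hb : Q.IsOrthoᵢ b) {l : Fin n}
    (hl : Q (b l) (b l) ≠ 0) {J : L → L →ₗ[ℝ] L} (hJ : ∀ x y z, Q (J x y) z = Q x ⁅y, z⁆)
    (i k : Fin n) :
    b.repr (J (b i) (b k)) l = structConst b k l i * Q (b i) (b i) / Q (b l) (b l) := by
  rw [hb.repr_eq_div hl, hQsymm, hJ, hb.apply_basis_left i, structConst]

theorem trace_J_comp_adjoint_J (hQsymm : ∀ x y, Q x y = Q y x)
    (hq : ∀ k, Q (b k) (b k) ≠ 0) (hb : Q.IsOrthoᵢ b) {adj : (L →ₗ[ℝ] L) → (L →ₗ[ℝ] L)}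
    (hadj : ∀ (A : L →ₗ[ℝ] L) (x y : L), Q (adj A x) y = Q x (A y))
    {J : L → L →ₗ[ℝ] L} (hJ : ∀ x y z, Q (J x y) z = Q x ⁅y, z⁆) (i : Fin n) :
    LinearMap.trace ℝ L (J (b i) ∘ₗ adj (J (b i)))
      = Q (b i) (b i) * ∑ j, ∑ k, structWeight b (fun i' => Q (b i') (b i')) j k i := by
  rw [hb.trace_comp_eq_sum hQsymm hq (hadj _), mul_sum]
  refine sum_congr rfl fun j _ => ?_
  rw [hb.apply_eq_sum, sum_div, mul_sum]
  refine sum_congr rfl fun k _ => ?_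
  rw [repr_J_basis hQsymm hb (hq k) hJ]
  have hqj := hq j
  have hqk := hq k
  simp only [structWeight]
  field_simp

theorem ricForm_basis_div (hQsymm : ∀ x y, Q x y = Q y x)
    (hq : ∀ k, Q (b k) (b k) ≠ 0) (hb : Q.IsOrthoᵢ b) {adj : (L →ₗ[ℝ] L) → (L →ₗ[ℝ] L)}
    (hadj : ∀ (A : L →ₗ[ℝ] L) (x y : L), Q (adj A x) y = Q x (A y))
    {J : L → L →ₗ[ℝ] L} (hJ : ∀ x y z, Q (J x y) z = Q x ⁅y, z⁆) (i : Fin n) :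
    ricForm adj J (b i) (b i) / Q (b i) (b i)
      = -(1/2) * ∑ k, ∑ l, structWeight b (fun i' => Q (b i') (b i')) i k l
        + (1/4) * ∑ j, ∑ k, structWeight b (fun i' => Q (b i') (b i')) j k i := by
  rw [ricForm, trace_ad_comp_adjoint_ad hQsymm hq hb hadj,
    trace_J_comp_adjoint_J hQsymm hq hb hadj hJ]
  have hqi := hq i
  field_simp

end Ricci

theorem sum_mul_rootVector {n : ℕ} (c : Fin n → Fin n → Fin n → ℝ) (i : Fin n) :
    ∑ t : Fin n × Fin n × Fin n, c t.1 t.2.1 t.2.2 * rootVector t.1 t.2.1 t.2.2 i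
      = ∑ k, ∑ l, c i k l + ∑ j, ∑ l, c j i l - ∑ j, ∑ k, c j k i := by
  simp only [Fintype.sum_prod_type, rootVector, mul_sub, mul_add, mul_ite, mul_one, mul_zero,
    sum_add_distrib, sum_sub_distrib, sum_ite_irrel, sum_const_zero, sum_ite_eq, mem_univ,
    if_true]

theorem two_nsmul_sum_filter_lt_of_swap {ι κ M : Type*} [Fintype ι] [LinearOrder ι] [Fintype κ]
    [AddCommMonoid M] (f : ι × ι × κ → M) (hswap : ∀ j k l, f (k, j, l) = f (j, k, l))
    (hdiag : ∀ j l, f (j, j, l) = 0) :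
    2 • ∑ t ∈ univ.filter (fun t => t.1 < t.2.1), f t = ∑ t, f t := by
  have hswapped : ∑ t ∈ univ.filter (fun t => ¬ t.1 < t.2.1), f t
      = ∑ t ∈ univ.filter (fun t => t.1 < t.2.1), f t := by
    rw [sum_filter, sum_filter]
    refine Fintype.sum_equiv
      (Function.Involutive.toPerm (fun t : ι × ι × κ => (t.2.1, t.1, t.2.2)) fun _ => rfl) _ _ ?_
    rintro ⟨j, k, l⟩
    change (if ¬ j < k then f (j, k, l) else 0) = if k < j then f (k, j, l) else 0
    rcases lt_trichotomy j k with h | rfl | h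
    · simp [h, h.le, not_lt.2]
    · simp [hdiag]
    · simp [h, not_lt.2 h.le, hswap]
  rw [two_nsmul, ← sum_filter_add_sum_filter_not univ (fun t : ι × ι × κ => t.1 < t.2.1) f,
    hswapped]

namespace IsEnumerationOfLambda

variable {n m : ℕ} {L : Type} [LieRing L] [LieAlgebra ℝ L] {b : Module.Basis (Fin n) ℝ L}
  {σ : Fin m → Fin n × Fin n × Fin n}

theorem injective (hσ : IsEnumerationOfLambda b σ) : Function.Injective σ := by
  intro r r' h
  by_contra hne
  rcases lt_or_gt_of_ne hne with hlt | hlt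
  · simpa [h, dictLt] using hσ.2 r r' hlt
  · simpa [h, dictLt] using hσ.2 r' r hlt

theorem sum_comp (hσ : IsEnumerationOfLambda b σ) {M : Type*} [AddCommMonoid M]
    (f : Fin n × Fin n × Fin n → M) :
    ∑ r, f (σ r) = ∑ t ∈ univ.filter
      (fun t => t.1 < t.2.1 ∧ structConst b t.1 t.2.1 t.2.2 ≠ 0), f t := by
  rw [← sum_image fun r _ r' _ h => hσ.injective h]
  congr 1
  ext t
  simp [hσ.1 t]

theorem sum_structVector_mul_rootMatrix (hσ : IsEnumerationOfLambda b σ) (q : Fin n → ℝ)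
    (i : Fin n) :
    ∑ r, structVector b σ q r * rootMatrix σ r i
      = ∑ k, ∑ l, structWeight b q i k l - (1/2) * ∑ j, ∑ k, structWeight b q j k i := by
  set g : Fin n × Fin n × Fin n → ℝ :=
    fun t => structWeight b q t.1 t.2.1 t.2.2 * rootVector t.1 t.2.1 t.2.2 i
  have hΛ : ∑ r, structVector b σ q r * rootMatrix σ r i
      = ∑ t ∈ univ.filter (fun t => t.1 < t.2.1), g t := by
    rw [← sum_filter_of_ne
      (p := fun t : Fin n × Fin n × Fin n => structConst b t.1 t.2.1 t.2.2 ≠ 0), filter_filter]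
    · exact hσ.sum_comp g
    · intro t _ hg hα
      simp [g, structWeight, hα] at hg
  have hhalf := two_nsmul_sum_filter_lt_of_swap g
    (fun j k l => by simp only [g, structWeight_swap, rootVector]; ring)
    (fun j l => by simp [g, structWeight, structConst_self])
  rw [two_nsmul, sum_mul_rootVector] at hhalf
  simp only [structWeight_swap b q i] at hhalf
  rw [hΛ]
  linarith

end IsEnumerationOfLambda

theorem stmt0_general
    {n m : ℕ} {L : Type} [LieRing L] [LieAlgebra ℝ L]
    -- the inner product
    (Q : L →ₗ[ℝ] L →ₗ[ℝ] ℝ)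
    (hQsymm : ∀ x y, Q x y = Q y x)
    (hQpos : ∀ x, x ≠ 0 → 0 < Q x x)
    -- orthogonal basis
    (b : Module.Basis (Fin n) ℝ L)
    (hb : ∀ i j, i ≠ j → Q (b i) (b j) = 0)
    -- enumeration of Λ_B in dictionary order
    (σ : Fin m → Fin n × Fin n × Fin n)
    (hσ : IsEnumerationOfLambda b σ)
    -- the Q-adjoint operation on endomorphisms
    (adj : (L →ₗ[ℝ] L) → (L →ₗ[ℝ] L))
    (hadj : ∀ (A : L →ₗ[ℝ] L) (x y : L), Q (adj A x) y = Q x (A y))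
    -- the map J, characterized by `⟨J_x y, z⟩ = ⟨x, ⁅y, z⁆⟩`
    (J : L → L →ₗ[ℝ] L)
    (hJ : ∀ x y z, Q (J x y) z = Q x ⁅y, z⁆) :
    ∀ i : Fin n,
      ricForm adj J (b i) (b i) / Q (b i) (b i)
        = -(1/2) * ∑ r : Fin m,
            structVector b σ (fun i' => Q (b i') (b i')) r * rootMatrix σ r i := by
  intro i
  have hq : ∀ k, Q (b k) (b k) ≠ 0 := fun k => (hQpos _ (b.ne_zero k)).ne'
  rw [ricForm_basis_div hQsymm hq (fun _ _ => hb _ _) hadj hJ, hσ.sum_structVector_mul_rootMatrix]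
  ring

/-- Let `(𝔫, Q)` be a nonabelian metric nilpotent Lie algebra
with orthogonal basis `B = {x_1, …, x_n}` and `q_i = Q(x_i, x_i)`.  Then for
every `i`, `ric(x_i, x_i)/q_i = -(1/2) Σ_{(j,k,l) ∈ Λ_B} (q_l/(q_j q_k))
(α_{jk}^l)² (y_{jk}^l)_i`, i.e. the Ricci vector equals `-(1/2) aᵀ Y`. -/
theorem stmt0
    {n m : ℕ} {L : Type} [LieRing L] [LieAlgebra ℝ L]
    [LieRing.IsNilpotent L]
    -- the inner product
    (Q : L →ₗ[ℝ] L →ₗ[ℝ] ℝ)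
    (hQsymm : ∀ x y, Q x y = Q y x)
    (hQpos : ∀ x, x ≠ 0 → 0 < Q x x)
    -- nonabelian
    (hnonab : ∃ x y : L, ⁅x, y⁆ ≠ 0)
    -- orthogonal basis
    (b : Module.Basis (Fin n) ℝ L)
    (hb : ∀ i j, i ≠ j → Q (b i) (b j) = 0)
    -- enumeration of Λ_B in dictionary order
    (σ : Fin m → Fin n × Fin n × Fin n)
    (hσ : IsEnumerationOfLambda b σ)
    -- the Q-adjoint operation on endomorphisms
    (adj : (L →ₗ[ℝ] L) → (L →ₗ[ℝ] L))
    (hadj : ∀ (A : L →ₗ[ℝ] L) (x y : L), Q (adj A x) y = Q x (A y))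
    -- the map J, characterized by `⟨J_x y, z⟩ = ⟨x, ⁅y, z⁆⟩`
    (J : L → L →ₗ[ℝ] L)
    (hJ : ∀ x y z, Q (J x y) z = Q x ⁅y, z⁆) :
    ∀ i : Fin n,
      ricForm adj J (b i) (b i) / Q (b i) (b i)
        = -(1/2) * ∑ r : Fin m,
            structVector b σ (fun i' => Q (b i') (b i')) r * rootMatrix σ r i :=
  stmt0_general Q hQsymm hQpos b hb σ hσ adj hadj J hJ
end

section
/- Let (𝔫, ⟨·,·⟩) be a nonabelian metric nilpotent Lie algebra with basis B = {x_1, …, x_n}, structure constants α_{jk}^l, root matrix Y and Gram matrix U relative to B, with m = |Λ_B|. Suppose q : [0,∞) → (0,∞)ⁿ is differentiable and satisfies the Ricci flow equations q_j′(t)/q_j(t) = (a(t)ᵀ Y)_j for j = 1, …, n, where a : [0,∞) → (0,∞)^m is defined by a_r(t) = (q_l(t)/(q_j(t) q_k(t)))(α_{jk}^l)² for the r-th triple (j,k,l) ∈ Λ_B. Then a is differentiable and satisfies the Lie bracket flow equations a_r′(t)/a_r(t) = −(a(t)ᵀ U)_r for all r = 1, …, m and all t ≥ 0. -/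
open Matrix

lemma dotProduct_rootVector {n : ℕ} (w : Fin n → ℝ) (j k l : Fin n) :
    w ⬝ᵥ rootVector j k l = w j + w k - w l := by
  simp only [dotProduct, rootVector, mul_sub, mul_add, mul_ite, mul_one, mul_zero,
    Finset.sum_sub_distrib, Finset.sum_add_distrib, Finset.sum_ite_eq', Finset.mem_univ,
    if_true]

lemma vecMul_gramMatrix_apply {n m : ℕ} (σ : Fin m → Fin n × Fin n × Fin n)
    (v : Fin m → ℝ) (r : Fin m) :
    (v ᵥ* gramMatrix σ) r = (v ᵥ* rootMatrix σ) (σ r).1 + (v ᵥ* rootMatrix σ) (σ r).2.1 -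
      (v ᵥ* rootMatrix σ) (σ r).2.2 := by
  rw [gramMatrix, ← vecMul_vecMul]
  exact dotProduct_rootVector _ _ _ _

lemma HasDerivWithinAt.div_mul_mul_const_of_logDeriv {f g h : ℝ → ℝ} {a b c : ℝ}
    {s : Set ℝ} {t : ℝ} (hf : HasDerivWithinAt f (f t * a) s t)
    (hg : HasDerivWithinAt g (g t * b) s t) (hh : HasDerivWithinAt h (h t * c) s t)
    (hg0 : g t ≠ 0) (hh0 : h t ≠ 0) (C : ℝ) :
    HasDerivWithinAt (fun τ => f τ / (g τ * h τ) * C)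
      (f t / (g t * h t) * C * (a - b - c)) s t := by
  refine ((hf.div (hg.mul hh) (mul_ne_zero hg0 hh0)).mul_const C).congr_deriv ?_
  simp only [Pi.mul_apply]
  field_simp
  ring

theorem stmt2_general
    {n m : ℕ} {L : Type} [LieRing L] [LieAlgebra ℝ L]
    (b : Module.Basis (Fin n) ℝ L)
    (σ : Fin m → Fin n × Fin n × Fin n)
    -- the diagonal metric coefficients along the flow
    (q : ℝ → Fin n → ℝ)
    (hqpos : ∀ t ∈ Set.Ici (0:ℝ), ∀ j, 0 < q t j)
    -- the Ricci flow equations `q_j' = q_j (a(t)ᵀ Y)_j`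
    (hflow : ∀ t ∈ Set.Ici (0:ℝ), ∀ j : Fin n,
      HasDerivWithinAt (fun τ => q τ j)
        (q t j * ∑ r : Fin m, structVector b σ (q t) r * rootMatrix σ r j)
        (Set.Ici 0) t) :
    -- the Lie bracket flow equations `a_r' = -a_r (a(t)ᵀ U)_r`
    ∀ t ∈ Set.Ici (0:ℝ), ∀ r : Fin m,
      HasDerivWithinAt (fun τ => structVector b σ (q τ) r)
        (-(structVector b σ (q t) r *
            ∑ r' : Fin m, structVector b σ (q t) r' * gramMatrix σ r' r))
        (Set.Ici 0) t := by
  intro t ht r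
  have hmonomial := (hflow t ht (σ r).2.2).div_mul_mul_const_of_logDeriv (hflow t ht (σ r).1)
    (hflow t ht (σ r).2.1) (hqpos t ht _).ne' (hqpos t ht _).ne'
    (structConst b (σ r).1 (σ r).2.1 (σ r).2.2 ^ 2)
  refine hmonomial.congr_deriv ?_
  have hrate := vecMul_gramMatrix_apply σ (structVector b σ (q t)) r
  simp only [vecMul, dotProduct] at hrate
  rw [hrate, structVector]
  ring

/-- Let `(𝔫, Q)` be a nonabelian metric nilpotent Lie algebra
with basis `B`, structure constants `α`, root matrix `Y` and Gram matrix `U`.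
If `q : [0,∞) → (0,∞)ⁿ` is differentiable and satisfies the Ricci flow
equations `q_j'/q_j = (a(t)ᵀ Y)_j`, where `a(t)` is the structure vector of
`q(t)`, then `a` is differentiable and satisfies the Lie bracket flow
equations `a_r'/a_r = -(a(t)ᵀ U)_r`. -/
theorem stmt2
    {n m : ℕ} {L : Type} [LieRing L] [LieAlgebra ℝ L]
    [LieRing.IsNilpotent L]
    (Q : L →ₗ[ℝ] L →ₗ[ℝ] ℝ)
    (hQsymm : ∀ x y, Q x y = Q y x)
    (hQpos : ∀ x, x ≠ 0 → 0 < Q x x)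
    (hnonab : ∃ x y : L, ⁅x, y⁆ ≠ 0)
    (b : Module.Basis (Fin n) ℝ L)
    (σ : Fin m → Fin n × Fin n × Fin n)
    (hσ : IsEnumerationOfLambda b σ)
    -- the diagonal metric coefficients along the flow
    (q : ℝ → Fin n → ℝ)
    (hqpos : ∀ t ∈ Set.Ici (0:ℝ), ∀ j, 0 < q t j)
    -- the Ricci flow equations `q_j' = q_j (a(t)ᵀ Y)_j`
    (hflow : ∀ t ∈ Set.Ici (0:ℝ), ∀ j : Fin n,
      HasDerivWithinAt (fun τ => q τ j)
        (q t j * ∑ r : Fin m, structVector b σ (q t) r * rootMatrix σ r j)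
        (Set.Ici 0) t) :
    -- the Lie bracket flow equations `a_r' = -a_r (a(t)ᵀ U)_r`
    ∀ t ∈ Set.Ici (0:ℝ), ∀ r : Fin m,
      HasDerivWithinAt (fun τ => structVector b σ (q τ) r)
        (-(structVector b σ (q t) r *
            ∑ r' : Fin m, structVector b σ (q t) r' * gramMatrix σ r' r))
        (Set.Ici 0) t :=
  stmt2_general b σ q hqpos hflow
end

section
/- Consider the system s_i′ = −s_i η_i(s), i = 1, …, m−1, where η_i(s) = n_i · (s_1, …, s_{m−1}, 1) and n_i is the i-th row minus the m-th row of the Gram matrix U of a nonabelian metric nilpotent Lie algebra relative to an orthogonal Ricci-diagonal basis. Let b ≥ 0 be an equilibrium point such that for some index i, b_i = 0 and η_i(b) < 0. Then b repels nearby points of the open positive orthant: there exists ε > 0 such that every solution s(t) taking values in (0,∞)^{m−1} with ‖s(0) − b‖ < ε leaves the set {s > 0 : ‖s − b‖ < ε} in finite time. -/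
/-- `η_i(s) = n_i · (s_1, …, s_{m-1}, 1)`, where `n_i` is the `i`-th row of
the matrix `U` minus its last row. -/
noncomputable def etaFun {m : ℕ} (U : Matrix (Fin (m+1)) (Fin (m+1)) ℝ)
    (i : Fin m) (s : Fin m → ℝ) : ℝ :=
  ∑ j, (U i.castSucc j - U (Fin.last m) j) * (Fin.snoc s (1:ℝ) : Fin (m+1) → ℝ) j

/-!
Near `v` the rate `η_{i₀}` stays below some `-c < 0`, so along a positive solution that never
leaves a small ball around `v` the coordinate `s_{i₀}` satisfies `s_{i₀}' ≥ c s_{i₀}` and grows at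
least linearly. Since `v i₀ = 0`, it is also bounded by `‖s - v‖`, a contradiction.
-/

open Set

lemma continuous_etaFun {m : ℕ} (U : Matrix (Fin (m+1)) (Fin (m+1)) ℝ) (i : Fin m) :
    Continuous (etaFun U i) := by
  refine continuous_finsetSum _ fun j _ => continuous_const.mul ?_
  induction j using Fin.lastCases with
  | last => simpa using continuous_const
  | cast k => simpa only [Fin.snoc_castSucc] using continuous_apply k

lemma monotoneOn_Ici_of_hasDerivWithinAt_nonneg {f f' : ℝ → ℝ} {a : ℝ}
    (hf : ∀ t ∈ Ici a, HasDerivWithinAt f (f' t) (Ici a) t) (hf' : ∀ t ∈ Ici a, 0 ≤ f' t) :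
    MonotoneOn f (Ici a) :=
  monotoneOn_of_hasDerivWithinAt_nonneg (convex_Ici a) (fun t ht => (hf t ht).continuousWithinAt)
    (fun t ht => (hf t (interior_subset ht)).mono interior_subset)
    (fun t ht => hf' t (interior_subset ht))

lemma le_add_mul_sub_of_hasDerivWithinAt {g g' : ℝ → ℝ} {a c : ℝ} (hc : 0 ≤ c)
    (hg : ∀ t ∈ Ici a, HasDerivWithinAt g (g' t) (Ici a) t) (hpos : ∀ t ∈ Ici a, 0 ≤ g t)
    (hg' : ∀ t ∈ Ici a, c * g t ≤ g' t) {t : ℝ} (ht : t ∈ Ici a) :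
    g a + c * g a * (t - a) ≤ g t := by
  have hmono : MonotoneOn g (Ici a) :=
    monotoneOn_Ici_of_hasDerivWithinAt_nonneg hg fun t ht =>
      (mul_nonneg hc (hpos t ht)).trans (hg' t ht)
  have hlin : MonotoneOn (fun t => g t - c * g a * (t - a)) (Ici a) := by
    refine monotoneOn_Ici_of_hasDerivWithinAt_nonneg
      (fun t ht => (hg t ht).sub (((hasDerivWithinAt_id t _).sub_const a).const_mul _))
      fun t ht => ?_
    have := mul_le_mul_of_nonneg_left (hmono self_mem_Ici ht ht) hc
    linarith [hg' t ht]
  have := hlin self_mem_Ici ht ht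
  simp only [sub_self, mul_zero, sub_zero] at this
  linarith

theorem stmt9_general
    {n m : ℕ}
    (σ : Fin (m+1) → Fin n × Fin n × Fin n)
    (v : Fin m → ℝ)
    (i₀ : Fin m)
    (hvi₀ : v i₀ = 0)
    (hneg : etaFun (gramMatrix σ) i₀ v < 0) :
    ∃ ε > (0:ℝ), ∀ s : ℝ → Fin m → ℝ,
      (∀ t ∈ Set.Ici (0:ℝ), ∀ i : Fin m,
        HasDerivWithinAt (fun τ => s τ i)
          (-(s t i * etaFun (gramMatrix σ) i (s t))) (Set.Ici 0) t) →
      (∀ t ∈ Set.Ici (0:ℝ), ∀ i, 0 < s t i) →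
      ‖s 0 - v‖ < ε →
      ∃ t ∈ Set.Ici (0:ℝ), ε ≤ ‖s t - v‖ := by
  set c := -etaFun (gramMatrix σ) i₀ v / 2 with hc_def
  have hc : 0 < c := by linarith
  obtain ⟨ε, hε, hball⟩ := Metric.isOpen_iff.mp
    (isOpen_lt (continuous_etaFun _ i₀) continuous_const) v
    (show etaFun (gramMatrix σ) i₀ v < -c by linarith)
  refine ⟨ε, hε, fun s hs hpos _ => ?_⟩
  by_contra! hnear
  have hgrow : ∀ t ∈ Ici (0:ℝ), s 0 i₀ + c * s 0 i₀ * t ≤ s t i₀ := fun t ht => by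
    simpa only [sub_zero] using le_add_mul_sub_of_hasDerivWithinAt hc.le
      (fun t ht => hs t ht i₀) (fun t ht => (hpos t ht i₀).le)
      (fun t ht => by
        have hrate : etaFun (gramMatrix σ) i₀ (s t) < -c :=
          hball (mem_ball_iff_norm.2 (hnear t ht))
        nlinarith [hpos t ht i₀])
      ht
  have hsmall : ∀ t ∈ Ici (0:ℝ), s t i₀ < ε := fun t ht =>
    calc s t i₀ = (s t - v) i₀ := by simp [hvi₀]
      _ ≤ ‖s t - v‖ := (Real.le_norm_self _).trans (norm_le_pi_norm _ i₀)
      _ < ε := hnear t ht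
  have hs0 := hpos 0 self_mem_Ici i₀
  have hT : ε / (c * s 0 i₀) ∈ Ici (0:ℝ) := mem_Ici.2 (by positivity)
  have hreach : c * s 0 i₀ * (ε / (c * s 0 i₀)) = ε := by field_simp
  linarith [hgrow _ hT, hsmall _ hT]

/-- For the system `s_i' = -s_i η_i(s)` associated with the
Gram matrix of a nonabelian metric nilpotent Lie algebra relative to an
orthogonal Ricci-diagonal basis, an equilibrium point `v ≥ 0` with `v i₀ = 0`
and `η_{i₀}(v) < 0` for some `i₀` repels nearby points of the open positive
orthant: there is `ε > 0` such that every solution with values in the open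
positive orthant starting within distance `ε` of `v` leaves the
`ε`-neighborhood of `v` in finite time. -/
theorem stmt9
    {n m : ℕ} {L : Type} [LieRing L] [LieAlgebra ℝ L]
    [LieRing.IsNilpotent L]
    (Q : L →ₗ[ℝ] L →ₗ[ℝ] ℝ)
    (hQsymm : ∀ x y, Q x y = Q y x)
    (hQpos : ∀ x, x ≠ 0 → 0 < Q x x)
    (hnonab : ∃ x y : L, ⁅x, y⁆ ≠ 0)
    (b : Module.Basis (Fin n) ℝ L)
    (hb : ∀ i j, i ≠ j → Q (b i) (b j) = 0)
    (σ : Fin (m+1) → Fin n × Fin n × Fin n)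
    (hσ : IsEnumerationOfLambda b σ)
    (adj : (L →ₗ[ℝ] L) → (L →ₗ[ℝ] L))
    (hadj : ∀ (A : L →ₗ[ℝ] L) (x y : L), Q (adj A x) y = Q x (A y))
    (J : L → L →ₗ[ℝ] L)
    (hJ : ∀ x y z, Q (J x y) z = Q x ⁅y, z⁆)
    (hdiag : ∀ i j, i ≠ j → ricForm adj J (b i) (b j) = 0)
    -- an equilibrium point `v` in the closed positive orthant
    (v : Fin m → ℝ)
    (hv0 : ∀ i, 0 ≤ v i)
    (hveq : ∀ i : Fin m, v i * etaFun (gramMatrix σ) i v = 0)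
    (i₀ : Fin m)
    (hvi₀ : v i₀ = 0)
    (hneg : etaFun (gramMatrix σ) i₀ v < 0) :
    ∃ ε > (0:ℝ), ∀ s : ℝ → Fin m → ℝ,
      (∀ t ∈ Set.Ici (0:ℝ), ∀ i : Fin m,
        HasDerivWithinAt (fun τ => s τ i)
          (-(s t i * etaFun (gramMatrix σ) i (s t))) (Set.Ici 0) t) →
      (∀ t ∈ Set.Ici (0:ℝ), ∀ i, 0 < s t i) →
      ‖s 0 - v‖ < ε →
      ∃ t ∈ Set.Ici (0:ℝ), ε ≤ ‖s t - v‖ :=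
  stmt9_general σ v i₀ hvi₀ hneg
end

section
/- Let (𝔫, ⟨·,·⟩) be a metric nilpotent Lie algebra and suppose there exist β ∈ ℝ and a derivation D of 𝔫 with D = Ric − β·Id, where D is symmetric with n distinct positive eigenvalues λ_1 < λ_2 < … < λ_n (so all eigenspaces are one-dimensional), and let B = {x_1, …, x_n} be a corresponding orthogonal eigenbasis with D x_i = λ_i x_i. Then for all i < j, the bracket [x_i, x_j] lies in the eigenspace of D for the eigenvalue λ_i + λ_j and hence is a scalar multiple of some x_k with k > j; moreover B is stably Ricci-diagonal: for every c = (c_1, …, c_n) ∈ (0,∞)ⁿ, the Ricci form ric_c of 𝔫 with respect to the rescaled inner product Q_c determined by Q_c(x_i, x_j) = c_i δ_{ij}⟨x_i, x_i⟩ satisfies ric_c(x_i, x_j) = 0 for all i ≠ j. -/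
/-- The basis `b`, orthogonal for the inner product `Q`, is *stably
Ricci-diagonal*: for every rescaling of the basis vectors by positive
constants `c`, the Ricci form of the rescaled inner product `Q_c`
(determined by `Q_c(b i, b j) = c i * δ_{ij} * Q(b i, b i)`) vanishes on
distinct basis vectors.  The Ricci form of `Q_c` is expressed through the
`Q_c`-adjoint operation `adjc` and the map `Jc` characterized by
`Q_c (Jc x y) z = Q_c x ⁅y, z⁆`. -/
def StablyRicciDiagonal {n : ℕ} {L : Type} [LieRing L] [LieAlgebra ℝ L]
    (Q : L →ₗ[ℝ] L →ₗ[ℝ] ℝ) (b : Module.Basis (Fin n) ℝ L) : Prop :=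
  ∀ (c : Fin n → ℝ), (∀ i, 0 < c i) →
  ∀ (Qc : L →ₗ[ℝ] L →ₗ[ℝ] ℝ),
    (∀ i j, Qc (b i) (b j) = if i = j then c i * Q (b i) (b i) else 0) →
  ∀ (adjc : (L →ₗ[ℝ] L) → (L →ₗ[ℝ] L)),
    (∀ (A : L →ₗ[ℝ] L) (x y : L), Qc (adjc A x) y = Qc x (A y)) →
  ∀ (Jc : L → L →ₗ[ℝ] L),
    (∀ x y z, Qc (Jc x y) z = Qc x ⁅y, z⁆) →
  ∀ i j, i ≠ j → ricForm adjc Jc (b i) (b j) = 0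

open Module

theorem LinearMap.trace_comp_eq_zero_of_repr {ι R M : Type*} [Fintype ι] [DecidableEq ι]
    [CommRing R] [AddCommGroup M] [Module R M] (b : Basis ι R M) {A B : M →ₗ[R] M}
    (h : ∀ k l, b.repr (A (b l)) k * b.repr (B (b k)) l = 0) :
    LinearMap.trace R M (A ∘ₗ B) = 0 := by
  rw [LinearMap.trace_eq_matrix_trace R b, LinearMap.toMatrix_comp b b b, Matrix.trace]
  exact Finset.sum_eq_zero fun k _ => Finset.sum_eq_zero fun l _ => by
    simpa [LinearMap.toMatrix_apply] using h k l

section DiagonalForm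

variable {ι K M : Type*} [DecidableEq ι] [Field K] [AddCommGroup M] [Module K M]
  (b : Basis ι K M) {Q : M →ₗ[K] M →ₗ[K] K} {d : ι → K}

theorem apply_basis_right_of_diagonal (hQ : ∀ i j, Q (b i) (b j) = if i = j then d i else 0)
    (v : M) (q : ι) : Q v (b q) = b.repr v q * d q := by
  have : Q.flip (b q) = d q • (Finsupp.lapply q ∘ₗ b.repr.toLinearMap) :=
    b.ext fun i => by by_cases h : i = q <;> simp [hQ, h]
  simpa [mul_comm] using LinearMap.congr_fun this v

theorem apply_basis_left_of_diagonal (hQ : ∀ i j, Q (b i) (b j) = if i = j then d i else 0)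
    (p : ι) (v : M) : Q (b p) v = d p * b.repr v p := by
  have : Q (b p) = d p • (Finsupp.lapply p ∘ₗ b.repr.toLinearMap) :=
    b.ext fun i => by by_cases h : p = i <;> simp [hQ, h]
  simpa using LinearMap.congr_fun this v

theorem repr_adjoint_apply_basis (hQ : ∀ i j, Q (b i) (b j) = if i = j then d i else 0)
    {A A' : M →ₗ[K] M} (hA : ∀ x y, Q (A' x) y = Q x (A y)) (k l : ι) :
    b.repr (A' (b k)) l * d l = d k * b.repr (A (b l)) k := by
  rw [← apply_basis_right_of_diagonal b hQ, hA, apply_basis_left_of_diagonal b hQ]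

/-- The Frobenius product `tr (A B*)` vanishes when the matrices of `A` and `B` have disjoint
supports. -/
theorem trace_comp_adjoint_eq_zero [Fintype ι]
    (hQ : ∀ i j, Q (b i) (b j) = if i = j then d i else 0) (hd : ∀ i, d i ≠ 0)
    {A B B' : M →ₗ[K] M} (hB : ∀ x y, Q (B' x) y = Q x (B y))
    (h : ∀ k l, b.repr (A (b l)) k = 0 ∨ b.repr (B (b l)) k = 0) :
    LinearMap.trace K M (A ∘ₗ B') = 0 := by
  refine LinearMap.trace_comp_eq_zero_of_repr b fun k l => ?_
  rcases h k l with hA | hB0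
  · rw [hA, zero_mul]
  · have := repr_adjoint_apply_basis b hQ hB k l
    rw [hB0, mul_zero, mul_eq_zero] at this
    rw [this.resolve_right (hd l), mul_zero]

end DiagonalForm

section Eigenbasis

variable {ι K M : Type*} [Field K] [AddCommGroup M] [Module K M]
  (b : Basis ι K M) {D : M →ₗ[K] M} {lam : ι → K}

theorem Module.Basis.repr_apply_of_apply_basis_eq_smul (hD : ∀ i, D (b i) = lam i • b i)
    (v : M) (k : ι) : b.repr (D v) k = lam k * b.repr v k := by
  have : Finsupp.lapply k ∘ₗ b.repr.toLinearMap ∘ₗ D =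
      lam k • (Finsupp.lapply k ∘ₗ b.repr.toLinearMap) :=
    b.ext fun i => by by_cases h : i = k <;> simp [hD, h]
  simpa using LinearMap.congr_fun this v

theorem Module.Basis.eq_of_repr_ne_zero_of_apply_eq_smul (hD : ∀ i, D (b i) = lam i • b i)
    {v : M} {μ : K} (hv : D v = μ • v) {k : ι} (hk : b.repr v k ≠ 0) : lam k = μ := by
  have := b.repr_apply_of_apply_basis_eq_smul hD v k
  rw [hv, map_smul, Finsupp.smul_apply, smul_eq_mul] at this
  exact (mul_right_cancel₀ hk this).symm

theorem Module.Basis.eq_zero_or_eq_smul_of_apply_eq_smul (hD : ∀ i, D (b i) = lam i • b i)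
    (hlam : Function.Injective lam) {v : M} {μ : K} (hv : D v = μ • v) :
    v = 0 ∨ ∃ k, lam k = μ ∧ ∃ t : K, v = t • b k := by
  by_cases hzero : v = 0
  · exact .inl hzero
  obtain ⟨k, hk⟩ : ∃ k, b.repr v k ≠ 0 := by
    by_contra! h
    exact hzero (b.repr.map_eq_zero_iff.mp (Finsupp.ext h))
  have hμ := b.eq_of_repr_ne_zero_of_apply_eq_smul hD hv hk
  have hsupp : ∀ m, b.repr v m ≠ 0 → m = k := fun m hm =>
    hlam ((b.eq_of_repr_ne_zero_of_apply_eq_smul hD hv hm).trans hμ.symm)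
  refine .inr ⟨k, hμ, b.repr v k, b.repr.injective ?_⟩
  ext m
  by_cases hm : m = k
  · simp [hm]
  · simpa [Ne.symm hm] using not_imp_comm.mp (hsupp m) hm

end Eigenbasis

theorem apply_lie_eq_add_smul_of_derivation {R L : Type*} [CommRing R] [LieRing L]
    [LieAlgebra R L] {D : L →ₗ[R] L} (hD : ∀ x y : L, D ⁅x, y⁆ = ⁅D x, y⁆ + ⁅x, D y⁆)
    {x y : L} {a c : R} (hx : D x = a • x) (hy : D y = c • y) :
    D ⁅x, y⁆ = (a + c) • ⁅x, y⁆ := by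
  rw [hD, hx, hy, smul_lie, lie_smul, add_smul]

def Module.Basis.IsGradedBy {ι K L : Type*} [Field K] [LieRing L] [LieAlgebra K L]
    (b : Basis ι K L) (lam : ι → K) : Prop :=
  ∀ p q k, b.repr ⁅b p, b q⁆ k ≠ 0 → lam p + lam q = lam k

theorem Module.Basis.isGradedBy_of_derivation {ι K L : Type*} [Field K] [LieRing L]
    [LieAlgebra K L] (b : Basis ι K L) {D : L →ₗ[K] L} {lam : ι → K}
    (hDder : ∀ x y : L, D ⁅x, y⁆ = ⁅D x, y⁆ + ⁅x, D y⁆) (hD : ∀ i, D (b i) = lam i • b i) :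
    b.IsGradedBy lam := fun p q _ hk =>
  (b.eq_of_repr_ne_zero_of_apply_eq_smul hD
    (apply_lie_eq_add_smul_of_derivation hDder (hD p) (hD q)) hk).symm

theorem repr_lie_adjoint_apply_basis {ι K L : Type*} [DecidableEq ι] [Field K] [LieRing L]
    [LieAlgebra K L] (b : Basis ι K L) {Q : L →ₗ[K] L →ₗ[K] K} {d : ι → K}
    (hQ : ∀ i j, Q (b i) (b j) = if i = j then d i else 0)
    {J : L → L →ₗ[K] L} (hJ : ∀ x y z, Q (J x y) z = Q x ⁅y, z⁆) (p l k : ι) :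
    b.repr (J (b p) (b l)) k * d k = d p * b.repr ⁅b l, b k⁆ p := by
  rw [← apply_basis_right_of_diagonal b hQ, hJ, apply_basis_left_of_diagonal b hQ]

theorem ricForm_basis_eq_zero {ι L : Type} [Fintype ι] [DecidableEq ι] [LieRing L]
    [LieAlgebra ℝ L] (b : Basis ι ℝ L) {Q : L →ₗ[ℝ] L →ₗ[ℝ] ℝ} {d : ι → ℝ}
    (hQ : ∀ i j, Q (b i) (b j) = if i = j then d i else 0)
    (hd : ∀ i, d i ≠ 0) {adj : (L →ₗ[ℝ] L) → (L →ₗ[ℝ] L)}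
    (hadj : ∀ (A : L →ₗ[ℝ] L) (x y : L), Q (adj A x) y = Q x (A y))
    {J : L → L →ₗ[ℝ] L} (hJ : ∀ x y z, Q (J x y) z = Q x ⁅y, z⁆) {i j : ι}
    (had : ∀ k l, b.repr ⁅b i, b l⁆ k = 0 ∨ b.repr ⁅b j, b l⁆ k = 0)
    (hJij : ∀ k l, b.repr ⁅b l, b k⁆ i = 0 ∨ b.repr ⁅b l, b k⁆ j = 0) :
    ricForm adj J (b i) (b j) = 0 := by
  have hJzero {p l k : ι} (h : b.repr ⁅b l, b k⁆ p = 0) : b.repr (J (b p) (b l)) k = 0 := by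
    have := repr_lie_adjoint_apply_basis b hQ hJ p l k
    rw [h, mul_zero, mul_eq_zero] at this
    exact this.resolve_right (hd k)
  have hJdisj k l : b.repr (J (b i) (b l)) k = 0 ∨ b.repr (J (b j) (b l)) k = 0 :=
    (hJij k l).imp hJzero hJzero
  rw [ricForm, trace_comp_adjoint_eq_zero b hQ hd (hadj _) had,
    trace_comp_adjoint_eq_zero b hQ hd (hadj _) hJdisj]
  ring

theorem Module.Basis.IsGradedBy.stablyRicciDiagonal {n : ℕ} {L : Type} [LieRing L]
    [LieAlgebra ℝ L] {b : Basis (Fin n) ℝ L} {lam : Fin n → ℝ} (hb : b.IsGradedBy lam)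
    (hlam : Function.Injective lam) {Q : L →ₗ[ℝ] L →ₗ[ℝ] ℝ} (hQ : ∀ i, Q (b i) (b i) ≠ 0) :
    StablyRicciDiagonal Q b := by
  intro c hc Qc hQc adjc hadjc Jc hJc i j hij
  have hne : lam i ≠ lam j := hlam.ne hij
  refine ricForm_basis_eq_zero b hQc (fun p => mul_ne_zero (hc p).ne' (hQ p)) hadjc hJc
    (fun k l => ?_) (fun k l => ?_)
  · by_contra! h
    exact hne (add_right_cancel ((hb i l k h.1).trans (hb j l k h.2).symm))
  · by_contra! h
    exact hne ((hb l k i h.1).symm.trans (hb l k j h.2))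

theorem stmt10_general
    {n : ℕ} {L : Type} [LieRing L] [LieAlgebra ℝ L]
    (Q : L →ₗ[ℝ] L →ₗ[ℝ] ℝ)
    (hQpos : ∀ x, x ≠ 0 → 0 < Q x x)
    -- an orthogonal basis
    (b : Module.Basis (Fin n) ℝ L)
    -- `D = Ric - β Id` is a symmetric derivation with eigenbasis `b` and
    -- distinct positive eigenvalues
    (D : L →ₗ[ℝ] L)
    (hDder : ∀ x y : L, D ⁅x, y⁆ = ⁅D x, y⁆ + ⁅x, D y⁆)
    (lam : Fin n → ℝ)
    (hmono : StrictMono lam)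
    (hlampos : ∀ i, 0 < lam i)
    (heig : ∀ i, D (b i) = lam i • b i) :
    (∀ i j : Fin n, i < j →
        D ⁅b i, b j⁆ = (lam i + lam j) • ⁅b i, b j⁆
        ∧ (⁅b i, b j⁆ = 0 ∨ ∃ k : Fin n, j < k ∧ ∃ t : ℝ, ⁅b i, b j⁆ = t • b k))
    ∧ StablyRicciDiagonal Q b := by
  have hbracket i j : D ⁅b i, b j⁆ = (lam i + lam j) • ⁅b i, b j⁆ :=
    apply_lie_eq_add_smul_of_derivation hDder (heig i) (heig j)
  refine ⟨fun i j _ => ⟨hbracket i j, ?_⟩, ?_⟩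
  · rcases b.eq_zero_or_eq_smul_of_apply_eq_smul heig hmono.injective (hbracket i j) with
      hzero | ⟨k, hk, t, ht⟩
    · exact .inl hzero
    · exact .inr ⟨k, hmono.lt_iff_lt.mp (by linarith [hlampos i]), t, ht⟩
  · exact (b.isGradedBy_of_derivation hDder heig).stablyRicciDiagonal hmono.injective
      fun i => (hQpos _ (b.ne_zero i)).ne'

/-- Let `(𝔫, Q)` be a metric nilpotent Lie algebra and
suppose `D = Ric - β·Id` is a symmetric derivation with `n` distinct positive
eigenvalues `λ_1 < ⋯ < λ_n` and orthogonal eigenbasis `B = {x_1, …, x_n}`.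
Then for `i < j` the bracket `⁅x_i, x_j⁆` lies in the eigenspace of `D` for
the eigenvalue `λ_i + λ_j`, hence is a scalar multiple of some `x_k` with
`k > j`; moreover `B` is stably Ricci-diagonal. -/
theorem stmt10
    {n : ℕ} {L : Type} [LieRing L] [LieAlgebra ℝ L]
    [LieRing.IsNilpotent L]
    (Q : L →ₗ[ℝ] L →ₗ[ℝ] ℝ)
    (hQsymm : ∀ x y, Q x y = Q y x)
    (hQpos : ∀ x, x ≠ 0 → 0 < Q x x)
    -- an orthogonal basis
    (b : Module.Basis (Fin n) ℝ L)
    (hb : ∀ i j, i ≠ j → Q (b i) (b j) = 0)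
    (adj : (L →ₗ[ℝ] L) → (L →ₗ[ℝ] L))
    (hadj : ∀ (A : L →ₗ[ℝ] L) (x y : L), Q (adj A x) y = Q x (A y))
    (J : L → L →ₗ[ℝ] L)
    (hJ : ∀ x y z, Q (J x y) z = Q x ⁅y, z⁆)
    -- the Ricci endomorphism
    (Ric : L →ₗ[ℝ] L)
    (hRic : ∀ x y, Q (Ric x) y = ricForm adj J x y)
    -- `D = Ric - β Id` is a symmetric derivation with eigenbasis `b` and
    -- distinct positive eigenvalues
    (β : ℝ) (D : L →ₗ[ℝ] L)
    (hD : D = Ric - β • LinearMap.id)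
    (hDder : ∀ x y : L, D ⁅x, y⁆ = ⁅D x, y⁆ + ⁅x, D y⁆)
    (hDsymm : ∀ x y, Q (D x) y = Q x (D y))
    (lam : Fin n → ℝ)
    (hmono : StrictMono lam)
    (hlampos : ∀ i, 0 < lam i)
    (heig : ∀ i, D (b i) = lam i • b i) :
    (∀ i j : Fin n, i < j →
        D ⁅b i, b j⁆ = (lam i + lam j) • ⁅b i, b j⁆
        ∧ (⁅b i, b j⁆ = 0 ∨ ∃ k : Fin n, j < k ∧ ∃ t : ℝ, ⁅b i, b j⁆ = t • b k))
    ∧ StablyRicciDiagonal Q b :=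
  stmt10_general Q hQpos b D hDder lam hmono hlampos heig
end

section
/- Let U be the m × m Gram matrix of a nonabelian metric nilpotent Lie algebra relative to a stably Ricci-diagonal basis, let β < 0 and let a_0 ∈ (0,∞)^m satisfy U a_0 = −2β·𝟙_m. If a : [0,∞) → ℝ^m is differentiable with a(0) = a_0 and satisfies the Lie bracket flow a_r′(t) = −a_r(t)(U a(t))_r for all r, then a(t) = (−2βt + 1)^{−1} a_0 for all t ≥ 0; in particular the ray ℝ⁺ a_0 is invariant under the flow, and each component satisfies the differential equation a_r′(t) = (2β/a_r(0)) a_r(t)². -/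
open Set
open scoped Matrix

theorem eqOn_Ici_of_locallyLipschitz {E : Type*} [NormedAddCommGroup E] [NormedSpace ℝ E]
    {v : E → E} (hv : LocallyLipschitz v) {f g : ℝ → E} {t₀ : ℝ}
    (hf : ∀ t ∈ Ici t₀, HasDerivWithinAt f (v (f t)) (Ici t₀) t)
    (hg : ∀ t ∈ Ici t₀, HasDerivWithinAt g (v (g t)) (Ici t₀) t)
    (h₀ : f t₀ = g t₀) : EqOn f g (Ici t₀) := by
  intro T hT
  have hfc : ContinuousOn f (Icc t₀ T) := fun t ht =>
    (hf t ht.1).continuousWithinAt.mono Icc_subset_Ici_self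
  have hgc : ContinuousOn g (Icc t₀ T) := fun t ht =>
    (hg t ht.1).continuousWithinAt.mono Icc_subset_Ici_self
  set K := f '' Icc t₀ T ∪ g '' Icc t₀ T
  obtain ⟨C, hC⟩ := (hv.locallyLipschitzOn (s := K)).exists_lipschitzOnWith_of_compact
    ((isCompact_Icc.image_of_continuousOn hfc).union (isCompact_Icc.image_of_continuousOn hgc))
  exact ODE_solution_unique_of_mem_Icc_right (v := fun _ => v) (s := fun _ => K)
    (fun _ _ => hC) hfc (fun t ht => (hf t ht.1).mono (Ici_subset_Ici.2 ht.1))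
    (fun t ht => Or.inl ⟨t, Ico_subset_Icc_self ht, rfl⟩) hgc
    (fun t ht => (hg t ht.1).mono (Ici_subset_Ici.2 ht.1))
    (fun t ht => Or.inr ⟨t, Ico_subset_Icc_self ht, rfl⟩) h₀ ⟨hT, le_rfl⟩

section BracketFlow

variable {ι : Type*} [Fintype ι]

noncomputable def bracketFlowField (U : Matrix ι ι ℝ) (x : ι → ℝ) : ι → ℝ :=
  fun r => -(x r * (U *ᵥ x) r)

theorem contDiff_bracketFlowField (U : Matrix ι ι ℝ) {n : WithTop ℕ∞} :
    ContDiff ℝ n (bracketFlowField U) := by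
  have hU : ContDiff ℝ n (U *ᵥ ·) := (Matrix.mulVecLin U).toContinuousLinearMap.contDiff
  exact contDiff_pi.2 fun r => ((contDiff_apply ℝ ℝ r).mul ((contDiff_apply ℝ ℝ r).comp hU)).neg

theorem hasDerivAt_inv_smul_of_mulVec_eq_const {U : Matrix ι ι ℝ} {a₀ : ι → ℝ} {c t : ℝ}
    (ha₀ : U *ᵥ a₀ = fun _ => c) (ht : c * t + 1 ≠ 0) :
    HasDerivAt (fun τ => (c * τ + 1)⁻¹ • a₀) (bracketFlowField U ((c * t + 1)⁻¹ • a₀)) t := by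
  have h : HasDerivAt (fun τ => c * τ + 1) c t := by
    simpa using ((hasDerivAt_id t).const_mul c).add_const 1
  refine ((h.inv ht).smul_const a₀).congr_deriv ?_
  ext r
  simp only [bracketFlowField, Matrix.mulVec_smul, ha₀, Pi.smul_apply, smul_eq_mul]
  field_simp

end BracketFlow

theorem stmt11_general
    {n m : ℕ}
    (σ : Fin m → Fin n × Fin n × Fin n)
    (β : ℝ) (hβ : β < 0)
    (a₀ : Fin m → ℝ)
    (ha₀ : (gramMatrix σ).mulVec a₀ = fun _ => -2 * β)
    (a : ℝ → Fin m → ℝ)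
    (ha0 : a 0 = a₀)
    (hflow : ∀ t ∈ Set.Ici (0:ℝ), ∀ r : Fin m,
      HasDerivWithinAt (fun τ => a τ r)
        (-(a t r * ∑ r' : Fin m, gramMatrix σ r r' * a t r'))
        (Set.Ici 0) t) :
    (∀ t ∈ Set.Ici (0:ℝ), ∀ r, a t r = (-2 * β * t + 1)⁻¹ * a₀ r)
    ∧ (∀ t ∈ Set.Ici (0:ℝ), ∃ c : ℝ, 0 < c ∧ a t = c • a₀)
    ∧ (∀ t ∈ Set.Ici (0:ℝ), ∀ r : Fin m,
        HasDerivWithinAt (fun τ => a τ r)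
          ((2 * β / a₀ r) * (a t r) ^ 2) (Set.Ici 0) t) := by
  have hpos : ∀ t ∈ Ici (0:ℝ), 0 < -2 * β * t + 1 := fun t ht => by
    nlinarith [mem_Ici.1 ht]
  have hsol : ∀ t ∈ Ici (0:ℝ), a t = (-2 * β * t + 1)⁻¹ • a₀ :=
    eqOn_Ici_of_locallyLipschitz (contDiff_bracketFlowField (n := 1) _).locallyLipschitz
      (fun t ht => hasDerivWithinAt_pi.2 (hflow t ht))
      (fun t ht => (hasDerivAt_inv_smul_of_mulVec_eq_const ha₀ (hpos t ht).ne').hasDerivWithinAt)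
      (by simp [ha0])
  refine ⟨fun t ht r => by rw [hsol t ht]; rfl,
    fun t ht => ⟨_, inv_pos.2 (hpos t ht), hsol t ht⟩,
    fun t ht r => (hflow t ht r).congr_deriv ?_⟩
  change -(a t r * (gramMatrix σ *ᵥ a t) r) = _
  rw [hsol t ht, Matrix.mulVec_smul, ha₀]
  simp only [Pi.smul_apply, smul_eq_mul]
  linear_combination (-2 * β * (-2 * β * t + 1)⁻¹ ^ 2) * mul_self_div_self (a₀ r)

/-- Let `U` be the Gram matrix of a nonabelian metric
nilpotent Lie algebra relative to a stably Ricci-diagonal basis, let `β < 0`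
and let `a₀ ∈ (0,∞)^m` satisfy `U a₀ = -2β 𝟙`.  If `a` is differentiable
with `a 0 = a₀` and satisfies the Lie bracket flow `a_r' = -a_r (U a)_r`,
then `a t = (-2βt + 1)⁻¹ a₀` for all `t ≥ 0`; in particular the ray `ℝ⁺ a₀`
is invariant, and each component satisfies `a_r' = (2β/a_r(0)) a_r²`. -/
theorem stmt11
    {n m : ℕ} {L : Type} [LieRing L] [LieAlgebra ℝ L]
    [LieRing.IsNilpotent L]
    (Q : L →ₗ[ℝ] L →ₗ[ℝ] ℝ)
    (hQsymm : ∀ x y, Q x y = Q y x)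
    (hQpos : ∀ x, x ≠ 0 → 0 < Q x x)
    (hnonab : ∃ x y : L, ⁅x, y⁆ ≠ 0)
    (b : Module.Basis (Fin n) ℝ L)
    (hb : ∀ i j, i ≠ j → Q (b i) (b j) = 0)
    (hstable : StablyRicciDiagonal Q b)
    (σ : Fin m → Fin n × Fin n × Fin n)
    (hσ : IsEnumerationOfLambda b σ)
    (β : ℝ) (hβ : β < 0)
    (a₀ : Fin m → ℝ)
    (ha₀pos : ∀ r, 0 < a₀ r)
    (ha₀ : (gramMatrix σ).mulVec a₀ = fun _ => -2 * β)
    (a : ℝ → Fin m → ℝ)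
    (ha0 : a 0 = a₀)
    (hflow : ∀ t ∈ Set.Ici (0:ℝ), ∀ r : Fin m,
      HasDerivWithinAt (fun τ => a τ r)
        (-(a t r * ∑ r' : Fin m, gramMatrix σ r r' * a t r'))
        (Set.Ici 0) t) :
    (∀ t ∈ Set.Ici (0:ℝ), ∀ r, a t r = (-2 * β * t + 1)⁻¹ * a₀ r)
    ∧ (∀ t ∈ Set.Ici (0:ℝ), ∃ c : ℝ, 0 < c ∧ a t = c • a₀)
    ∧ (∀ t ∈ Set.Ici (0:ℝ), ∀ r : Fin m,
        HasDerivWithinAt (fun τ => a τ r)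
          ((2 * β / a₀ r) * (a t r) ^ 2) (Set.Ici 0) t) :=
  stmt11_general σ β hβ a₀ ha₀ a ha0 hflow
end

section
/- Let β < 0, let r = (r_1, …, r_n) ∈ ℝⁿ, and let q_j(t) = q_j(0)(−2βt + 1)^{r_j/β}, j = 1, …, n, with q_j(0) > 0, be the solution to the Ricci flow for a soliton metric nilpotent Lie algebra with soliton constant β and Ricci vector r relative to a stably Ricci-diagonal basis. Let r_min = min_j r_j. Then for each j, lim_{t → ∞} q_j(t)/(−2βt + 1)^{r_min/β} equals q_j(0) if r_j = r_min, and equals 0 if r_j > r_min. Consequently the volume-normalized metric collapses: its limit is a degenerate symmetric bilinear form that is positive definite exactly on the span of the basis vectors x_j with r_j = r_min (the eigenspace E_min for the minimal eigenvalue of the Ricci form) and vanishes on the remaining basis directions. -/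
/-!
On `t ≥ 0` the base `x = -2βt + 1` is positive and tends to `∞`, and
`q_j(t) / x^(r_min/β) = q_j(0) x^((r_j - r_min)/β)`. The exponent vanishes when `r_j = r_min`
and is negative otherwise since `β < 0`, which gives the limits. The limit form is then
diagonal with entries `q_j(0) > 0` on the directions with `r_j = r_min` and `0` elsewhere.
-/

open Filter Topology

lemma tendsto_neg_two_mul_add_one_atTop {β : ℝ} (hβ : β < 0) :
    Tendsto (fun t : ℝ => -2 * β * t + 1) atTop atTop :=
  tendsto_atTop_add_const_right _ _ (tendsto_id.const_mul_atTop (by linarith))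

lemma tendsto_rpow_atTop_of_neg {α : Type*} {l : Filter α} {x : α → ℝ}
    (hx : Tendsto x l atTop) {e : ℝ} (he : e < 0) :
    Tendsto (fun a => x a ^ e) l (𝓝 0) := by
  simpa [Function.comp_def] using (tendsto_rpow_neg_atTop (y := -e) (by linarith)).comp hx

lemma tendsto_mul_rpow_div_rpow {α : Type*} {l : Filter α} {x : α → ℝ}
    (hx : Tendsto x l atTop) (c : ℝ) {κ s s₀ : ℝ} (hκ : κ < 0) (hs : s₀ ≤ s) :
    Tendsto (fun a => c * x a ^ (s / κ) / x a ^ (s₀ / κ)) l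
      (𝓝 (if s = s₀ then c else 0)) := by
  have hquot : (fun a => c * x a ^ ((s - s₀) / κ)) =ᶠ[l]
      fun a => c * x a ^ (s / κ) / x a ^ (s₀ / κ) := by
    filter_upwards [hx.eventually_gt_atTop 0] with a ha
    rw [sub_div, Real.rpow_sub ha, mul_div_assoc]
  refine Tendsto.congr' hquot ?_
  split_ifs with h
  · simpa [h] using tendsto_const_nhds
  · have hneg : (s - s₀) / κ < 0 :=
      div_neg_of_pos_of_neg (sub_pos.mpr (lt_of_le_of_ne hs (Ne.symm h))) hκ
    simpa using (tendsto_rpow_atTop_of_neg hx hneg).const_mul c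

section DiagonalForm

variable {ι : Type*} [Fintype ι] (p : ι → Prop) [DecidablePred p] (w v : ι → ℝ)

lemma sum_ite_mul_sq_pos (hw : ∀ i, p i → 0 < w i) (hv : ∀ i, ¬ p i → v i = 0)
    (hv₀ : v ≠ 0) : 0 < ∑ i, (if p i then w i else 0) * v i ^ 2 := by
  obtain ⟨j, hj⟩ := Function.ne_iff.mp hv₀
  have hpj : p j := by_contra fun h => hj (hv j h)
  refine Finset.sum_pos' (fun i _ => ?_) ⟨j, Finset.mem_univ j, ?_⟩
  · split_ifs with h
    · exact mul_nonneg (hw i h).le (sq_nonneg _)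
    · simp
  · rw [if_pos hpj]
    exact mul_pos (hw j hpj) (sq_pos_of_ne_zero hj)

lemma sum_ite_mul_sq_eq_zero (hv : ∀ i, p i → v i = 0) :
    ∑ i, (if p i then w i else 0) * v i ^ 2 = 0 :=
  Finset.sum_eq_zero fun i _ => by by_cases h : p i <;> simp [h, hv]

end DiagonalForm

theorem stmt13_general
    {n : ℕ}
    (β : ℝ) (hβ : β < 0)
    -- the Ricci vector `r` and its minimum `rmin`
    (r : Fin n → ℝ)
    (rmin : ℝ)
    (hrmin : IsLeast (Set.range r) rmin)
    -- the solution of the Ricci flow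
    (q : ℝ → Fin n → ℝ)
    (hq0 : ∀ j, 0 < q 0 j)
    (hq : ∀ t ∈ Set.Ici (0:ℝ), ∀ j,
      q t j = q 0 j * (-2 * β * t + 1) ^ (r j / β)) :
    (∀ j, Filter.Tendsto (fun t => q t j / (-2 * β * t + 1) ^ (rmin / β))
        Filter.atTop (nhds (if r j = rmin then q 0 j else 0)))
    ∧ (∀ v : Fin n → ℝ, (∀ j, r j ≠ rmin → v j = 0) → v ≠ 0 →
        0 < ∑ j, (if r j = rmin then q 0 j else 0) * v j ^ 2)
    ∧ (∀ v : Fin n → ℝ, (∀ j, r j = rmin → v j = 0) →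
        ∑ j, (if r j = rmin then q 0 j else 0) * v j ^ 2 = 0) := by
  refine ⟨fun j => ?_, fun v => sum_ite_mul_sq_pos _ _ v fun j _ => hq0 j,
    fun v => sum_ite_mul_sq_eq_zero _ _ v⟩
  have hflow : (fun t => q 0 j * (-2 * β * t + 1) ^ (r j / β) / (-2 * β * t + 1) ^ (rmin / β))
      =ᶠ[atTop] fun t => q t j / (-2 * β * t + 1) ^ (rmin / β) := by
    filter_upwards [eventually_ge_atTop 0] with t ht
    rw [hq t ht j]
  exact (tendsto_mul_rpow_div_rpow (tendsto_neg_two_mul_add_one_atTop hβ) (q 0 j) hβ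
    (hrmin.2 ⟨j, rfl⟩)).congr' hflow

/-- Let `β < 0`, `r` the Ricci vector, and
`q_j(t) = q_j(0) (-2βt+1)^{r_j/β}` the solution to the Ricci flow for a
soliton metric nilpotent Lie algebra with soliton constant `β` relative to a
stably Ricci-diagonal basis, with `q_j(0) > 0`.  Let `r_min = min_j r_j`.
Then `q_j(t)/(-2βt+1)^{r_min/β}` tends to `q_j(0)` when `r_j = r_min` and to
`0` otherwise; consequently the volume-normalized metric collapses to a
degenerate form which is positive definite exactly on the span of the `x_j`
with `r_j = r_min` and vanishes on the remaining directions. -/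
theorem stmt13
    {n m : ℕ} {L : Type} [LieRing L] [LieAlgebra ℝ L]
    [LieRing.IsNilpotent L]
    (Q : L →ₗ[ℝ] L →ₗ[ℝ] ℝ)
    (hQsymm : ∀ x y, Q x y = Q y x)
    (hQpos : ∀ x, x ≠ 0 → 0 < Q x x)
    (hnonab : ∃ x y : L, ⁅x, y⁆ ≠ 0)
    (b : Module.Basis (Fin n) ℝ L)
    (hb : ∀ i j, i ≠ j → Q (b i) (b j) = 0)
    (hstable : StablyRicciDiagonal Q b)
    (σ : Fin m → Fin n × Fin n × Fin n)
    (hσ : IsEnumerationOfLambda b σ)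
    (adj : (L →ₗ[ℝ] L) → (L →ₗ[ℝ] L))
    (hadj : ∀ (A : L →ₗ[ℝ] L) (x y : L), Q (adj A x) y = Q x (A y))
    (J : L → L →ₗ[ℝ] L)
    (hJ : ∀ x y z, Q (J x y) z = Q x ⁅y, z⁆)
    -- the inner product is a soliton inner product with soliton constant `β`
    (Ric : L →ₗ[ℝ] L)
    (hRic : ∀ x y, Q (Ric x) y = ricForm adj J x y)
    (β : ℝ) (hβ : β < 0)
    (hsoliton : ∀ x y : L,
      (Ric - β • LinearMap.id : L →ₗ[ℝ] L) ⁅x, y⁆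
        = ⁅(Ric - β • LinearMap.id : L →ₗ[ℝ] L) x, y⁆
          + ⁅x, (Ric - β • LinearMap.id : L →ₗ[ℝ] L) y⁆)
    -- the Ricci vector `r` and its minimum `rmin`
    (r : Fin n → ℝ)
    (hr : ∀ j, r j = ricForm adj J (b j) (b j) / Q (b j) (b j))
    (rmin : ℝ)
    (hrmin : IsLeast (Set.range r) rmin)
    -- the solution of the Ricci flow
    (q : ℝ → Fin n → ℝ)
    (hq0 : ∀ j, 0 < q 0 j)
    (hq : ∀ t ∈ Set.Ici (0:ℝ), ∀ j,
      q t j = q 0 j * (-2 * β * t + 1) ^ (r j / β)) :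
    (∀ j, Filter.Tendsto (fun t => q t j / (-2 * β * t + 1) ^ (rmin / β))
        Filter.atTop (nhds (if r j = rmin then q 0 j else 0)))
    ∧ (∀ v : Fin n → ℝ, (∀ j, r j ≠ rmin → v j = 0) → v ≠ 0 →
        0 < ∑ j, (if r j = rmin then q 0 j else 0) * v j ^ 2)
    ∧ (∀ v : Fin n → ℝ, (∀ j, r j = rmin → v j = 0) →
        ∑ j, (if r j = rmin then q 0 j else 0) * v j ^ 2 = 0) :=
  stmt13_general β hβ r rmin hrmin q hq0 hq
end

section
/- Let c > 0 and define q_1(t) = q_2(t) = (3ct + 1)^{1/3} and q_3(t) = (3ct + 1)^{−1/3} for t ≥ 0. Then a(t) := c·q_3(t)/(q_1(t) q_2(t)) = c(3ct + 1)^{−1}, the function a satisfies a′ = −3a² with a(0) = c, and (q_1, q_2, q_3) satisfies the Ricci flow system for the three-dimensional Heisenberg algebra: q_1′/q_1 = a, q_2′/q_2 = a, q_3′/q_3 = −a, with q_1(0) = q_2(0) = q_3(0) = 1. -/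
/-!
With `u t = 3ct + 1 > 0` on `t ≥ 0`, every `q_i` is a power `u ^ p`, whose logarithmic
derivative is `p u' / u = 3cp / u`. For `p = ±1/3` this is `±c / u`, and `c / u` is exactly
`c q₃ / (q₁ q₂) = c u^{-1/3 - 2/3}`; the same computation with `p = -1` gives `a' = -3a²`.
-/

open Set

lemma hasDerivAt_rpow_mul_add_one {k t : ℝ} (p : ℝ) (h : 0 < k * t + 1) :
    HasDerivAt (fun s => (k * s + 1) ^ p) ((k * t + 1) ^ p * (p * k * (k * t + 1)⁻¹)) t := by
  have hlin : HasDerivAt (fun s => k * s + 1) k t := by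
    simpa using ((hasDerivAt_id t).const_mul k).add_const 1
  convert hlin.rpow_const (p := p) (Or.inl h.ne') using 1
  rw [Real.rpow_sub_one h.ne']
  field_simp

lemma rpow_neg_third_div_rpow_third_sq {x : ℝ} (hx : 0 < x) :
    x ^ (-(1:ℝ)/3) / (x ^ ((1:ℝ)/3) * x ^ ((1:ℝ)/3)) = x⁻¹ := by
  rw [← Real.rpow_add hx, ← Real.rpow_sub hx, ← Real.rpow_neg_one]
  norm_num

/-- Let `c > 0`, `q₁(t) = q₂(t) = (3ct+1)^{1/3}` and
`q₃(t) = (3ct+1)^{-1/3}`.  Then `a(t) := c q₃(t)/(q₁(t) q₂(t)) = c (3ct+1)⁻¹`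
satisfies `a' = -3a²` with `a(0) = c`, and `(q₁, q₂, q₃)` satisfies the Ricci
flow system for the three-dimensional Heisenberg algebra
`q₁'/q₁ = a`, `q₂'/q₂ = a`, `q₃'/q₃ = -a`, with `q₁(0) = q₂(0) = q₃(0) = 1`. -/
theorem stmt15
    (c : ℝ) (hc : 0 < c)
    (q₁ q₂ q₃ a : ℝ → ℝ)
    (hq₁ : ∀ t, q₁ t = (3 * c * t + 1) ^ ((1:ℝ)/3))
    (hq₂ : ∀ t, q₂ t = (3 * c * t + 1) ^ ((1:ℝ)/3))
    (hq₃ : ∀ t, q₃ t = (3 * c * t + 1) ^ (-(1:ℝ)/3))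
    (ha : ∀ t, a t = c * q₃ t / (q₁ t * q₂ t)) :
    (∀ t ∈ Set.Ici (0:ℝ), a t = c * (3 * c * t + 1)⁻¹)
    ∧ a 0 = c
    ∧ (∀ t ∈ Set.Ici (0:ℝ), HasDerivWithinAt a (-3 * (a t) ^ 2) (Set.Ici 0) t)
    ∧ q₁ 0 = 1 ∧ q₂ 0 = 1 ∧ q₃ 0 = 1
    ∧ (∀ t ∈ Set.Ici (0:ℝ), HasDerivWithinAt q₁ (q₁ t * a t) (Set.Ici 0) t)
    ∧ (∀ t ∈ Set.Ici (0:ℝ), HasDerivWithinAt q₂ (q₂ t * a t) (Set.Ici 0) t)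
    ∧ (∀ t ∈ Set.Ici (0:ℝ), HasDerivWithinAt q₃ (-(q₃ t * a t)) (Set.Ici 0) t) := by
  have hpos : ∀ t ∈ Ici (0:ℝ), 0 < 3 * c * t + 1 := fun t (ht : 0 ≤ t) => by positivity
  have ha_eq : ∀ t ∈ Ici (0:ℝ), a t = c * (3 * c * t + 1)⁻¹ := fun t ht => by
    rw [ha, hq₁, hq₂, hq₃, mul_div_assoc, rpow_neg_third_div_rpow_third_sq (hpos t ht)]
  have hpow : ∀ p, ∀ t ∈ Ici (0:ℝ), HasDerivWithinAt (fun s => (3 * c * s + 1) ^ p)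
      ((3 * c * t + 1) ^ p * (p * (3 * c) * (3 * c * t + 1)⁻¹)) (Ici 0) t :=
    fun p t ht => (hasDerivAt_rpow_mul_add_one p (hpos t ht)).hasDerivWithinAt
  obtain rfl : q₁ = _ := funext hq₁
  obtain rfl : q₂ = _ := funext hq₂
  obtain rfl : q₃ = _ := funext hq₃
  refine ⟨ha_eq, by simpa using ha_eq 0 self_mem_Ici, ?_, by simp, by simp, by simp,
    fun t ht => ?_, fun t ht => ?_, fun t ht => ?_⟩
  · intro t ht
    have ha_rpow : EqOn a (fun s => c * (3 * c * s + 1) ^ (-1:ℝ)) (Ici 0) := fun s hs => by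
      simp only [ha_eq s hs, Real.rpow_neg_one]
    refine (((hpow (-1) t ht).const_mul c).congr ha_rpow (ha_rpow ht)).congr_deriv ?_
    rw [ha_eq t ht, Real.rpow_neg_one]
    ring
  all_goals
    refine (hpow _ t ht).congr_deriv ?_
    rw [ha_eq t ht]
    ring
end

section
/- Consider the planar system s_1′ = −s_1(2s_1 − s_2 − 2), s_2′ = −s_2(−s_1 + 2s_2 − 2) on the open quadrant (0,∞)². For every initial condition s(0) ∈ (0,∞)², the maximal solution is defined for all t ≥ 0, remains in (0,∞)², and converges to the equilibrium point (2, 2) as t → ∞. -/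
/-!
Write `ψ(x) = x - 2 - 2 log (x / 2)` and `V(s) = ψ(s₁) + ψ(s₂)`. Since
`η(s) = A (s - (2,2))` with `A = [[2,-1],[-1,2]]` positive definite, along the flow
`V' = -(s - (2,2))ᵀ A (s - (2,2)) ≤ 0`. The coordinates stay positive because
`sᵢ' = cᵢ(t) sᵢ`, so a trajectory stays in the sublevel set `{V ≤ V(s(0))}`, where the
coordinates are bounded above, and below by some `α > 0`. There `ψ(x) ≤ (x-2)²/x` gives
`V' ≤ -α V`, so `V(s(t)) → 0` exponentially, and `ψ(x) ≥ 2 (√(x/2) - 1)²` turns this into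
`s(t) → (2,2)`.

For existence, the vector field is clamped to a box around that sublevel set, which makes it
globally Lipschitz and bounded; the clamped solution cannot leave the box, since up to the
first exit time it solves the original system and `V` decreases, so it solves the original
system for all `t ≥ 0`.
-/

open Set Filter Topology Real
open scoped NNReal

theorem HasDerivWithinAt.fst {E F : Type*} [NormedAddCommGroup E] [NormedSpace ℝ E]
    [NormedAddCommGroup F] [NormedSpace ℝ F] {f : ℝ → E × F} {f' : E × F} {s : Set ℝ} {x : ℝ}
    (h : HasDerivWithinAt f f' s x) : HasDerivWithinAt (fun y => (f y).1) f'.1 s x :=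
  (ContinuousLinearMap.fst ℝ E F).hasFDerivAt.comp_hasDerivWithinAt x h

theorem HasDerivWithinAt.snd {E F : Type*} [NormedAddCommGroup E] [NormedSpace ℝ E]
    [NormedAddCommGroup F] [NormedSpace ℝ F] {f : ℝ → E × F} {f' : E × F} {s : Set ℝ} {x : ℝ}
    (h : HasDerivWithinAt f f' s x) : HasDerivWithinAt (fun y => (f y).2) f'.2 s x :=
  (ContinuousLinearMap.snd ℝ E F).hasFDerivAt.comp_hasDerivWithinAt x h

theorem Convex.monotoneOn_of_hasDerivWithinAt_nonneg {D : Set ℝ} (hD : Convex ℝ D)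
    {f f' : ℝ → ℝ} (hf : ∀ t ∈ D, HasDerivWithinAt f (f' t) D t) (hf' : ∀ t ∈ D, 0 ≤ f' t) :
    MonotoneOn f D :=
  _root_.monotoneOn_of_hasDerivWithinAt_nonneg hD (fun t ht => (hf t ht).continuousWithinAt)
    (fun t ht => (hf t (interior_subset ht)).mono interior_subset)
    (fun t ht => hf' t (interior_subset ht))

theorem Convex.antitoneOn_of_hasDerivWithinAt_nonpos {D : Set ℝ} (hD : Convex ℝ D)
    {f f' : ℝ → ℝ} (hf : ∀ t ∈ D, HasDerivWithinAt f (f' t) D t) (hf' : ∀ t ∈ D, f' t ≤ 0) :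
    AntitoneOn f D :=
  _root_.antitoneOn_of_hasDerivWithinAt_nonpos hD (fun t ht => (hf t ht).continuousWithinAt)
    (fun t ht => (hf t (interior_subset ht)).mono interior_subset)
    (fun t ht => hf' t (interior_subset ht))

theorem pos_of_hasDerivWithinAt_eq_mul_self {f c : ℝ → ℝ} (hc : ContinuousOn c (Ici 0))
    (hf : ∀ t ∈ Ici (0 : ℝ), HasDerivWithinAt f (c t * f t) (Ici 0) t) (h0 : 0 < f 0) :
    ∀ t ∈ Ici (0 : ℝ), 0 < f t := by
  -- integrating factor `exp (-∫₀ᵗ c)`, with `c` extended continuously to `ℝ`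
  set c' : ℝ → ℝ := fun t => c (max t 0)
  have hc' : Continuous c' :=
    hc.comp_continuous (continuous_id.max continuous_const) fun t => le_max_right t 0
  set A : ℝ → ℝ := fun t => ∫ u in (0 : ℝ)..t, c' u
  have hA : ∀ t ∈ Ici (0 : ℝ), HasDerivWithinAt (fun u => -A u) (-c t) (Ici 0) t := by
    intro t ht
    have := (hc'.integral_hasStrictDerivAt 0 t).hasDerivAt.neg.hasDerivWithinAt (s := Ici 0)
    have hct : c' t = c t := congrArg c (max_eq_left (mem_Ici.1 ht))
    rw [hct] at this
    exact this
  have hmono : MonotoneOn (fun t => f t * exp (-A t)) (Ici 0) :=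
    (convex_Ici 0).monotoneOn_of_hasDerivWithinAt_nonneg
      (fun t ht => (hf t ht).mul (hA t ht).exp) (fun t _ => le_of_eq (by ring))
  intro t ht
  have hle := hmono self_mem_Ici ht (mem_Ici.1 ht)
  have : 0 < f t * exp (-A t) := lt_of_lt_of_le (by positivity) hle
  exact pos_of_mul_pos_left this (exp_pos _).le

section GlobalExistence

variable {E : Type*} [NormedAddCommGroup E] [NormedSpace ℝ E] {v : E → E} {K : ℝ≥0}

theorem IsIntegralCurveOn.eqOn_Icc_of_lipschitzWith {γ γ' : ℝ → E} {T : ℝ}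
    (hv : LipschitzWith K v) (hγ : IsIntegralCurveOn γ (fun _ => v) (Icc 0 T))
    (hγ' : IsIntegralCurveOn γ' (fun _ => v) (Icc 0 T)) (h0 : γ 0 = γ' 0) :
    EqOn γ γ' (Icc 0 T) :=
  ODE_solution_unique (fun _ => hv) hγ.continuousOn
    (fun t ht => (hγ t (Ico_subset_Icc_self ht)).mono_of_mem_nhdsWithin
      (Icc_mem_nhdsGE_of_mem ht))
    hγ'.continuousOn
    (fun t ht => (hγ' t (Ico_subset_Icc_self ht)).mono_of_mem_nhdsWithin
      (Icc_mem_nhdsGE_of_mem ht))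
    h0

variable [CompleteSpace E] {C : ℝ}

theorem exists_isIntegralCurveOn_Icc_of_lipschitzWith (hv : LipschitzWith K v)
    (hC : ∀ x, ‖v x‖ ≤ C) (x₀ : E) {T : ℝ} (hT : 0 ≤ T) :
    ∃ γ : ℝ → E, γ 0 = x₀ ∧ IsIntegralCurveOn γ (fun _ => v) (Icc 0 T) := by
  have hPL : IsPicardLindelof (fun _ => v) (tmin := 0) (tmax := T) ⟨0, left_mem_Icc.2 hT⟩ x₀
      (C.toNNReal * T.toNNReal) 0 C.toNNReal K :=
    { lipschitzOnWith := fun _ _ => hv.lipschitzOnWith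
      continuousOn := fun _ _ => continuousOn_const
      norm_le := fun _ _ x _ => (hC x).trans (le_coe_toNNReal C)
      mul_max_le := by simp [hT] }
  exact hPL.exists_eq_forall_mem_Icc_hasDerivWithinAt₀

theorem exists_isIntegralCurveOn_Ici_of_lipschitzWith (hv : LipschitzWith K v)
    (hC : ∀ x, ‖v x‖ ≤ C) (x₀ : E) :
    ∃ γ : ℝ → E, γ 0 = x₀ ∧ IsIntegralCurveOn γ (fun _ => v) (Ici 0) := by
  choose sol hsol₀ hsol using fun n : ℕ =>
    exists_isIntegralCurveOn_Icc_of_lipschitzWith hv hC x₀ n.cast_nonneg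
  have hagree : ∀ m n : ℕ, EqOn (sol m) (sol n) (Icc 0 (min (m : ℝ) n)) := fun m n =>
    IsIntegralCurveOn.eqOn_Icc_of_lipschitzWith hv
      ((hsol m).mono (Icc_subset_Icc_right (min_le_left _ _)))
      ((hsol n).mono (Icc_subset_Icc_right (min_le_right _ _))) ((hsol₀ m).trans (hsol₀ n).symm)
  have hlt : ∀ t : ℝ, t < (⌊t⌋₊ + 1 : ℕ) := fun t => by
    push_cast; exact Nat.lt_floor_add_one t
  set γ : ℝ → E := fun t => sol (⌊t⌋₊ + 1) t
  have hγ : ∀ n : ℕ, EqOn γ (sol n) (Icc 0 (n : ℝ)) := fun n t ht =>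
    hagree _ n ⟨ht.1, le_min (hlt t).le ht.2⟩
  refine ⟨γ, (hγ 0 (left_mem_Icc.2 (Nat.cast_nonneg 0))).trans (hsol₀ 0), fun t ht => ?_⟩
  set n := ⌊t⌋₊ + 1
  have htn : t ∈ Icc 0 (n : ℝ) := ⟨ht, (hlt t).le⟩
  have hderiv : HasDerivWithinAt γ (v (γ t)) (Icc 0 (n : ℝ)) t := by
    rw [hγ n htn]
    exact (hsol n t htn).congr (hγ n) (hγ n htn)
  refine hderiv.mono_of_mem_nhdsWithin (mem_of_superset
    (inter_mem_nhdsWithin (Ici 0) (Iio_mem_nhds (hlt t))) fun u hu => ⟨hu.1, hu.2.le⟩)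

end GlobalExistence

section Clamp

variable {lo hi : ℝ}

noncomputable def clampBox (h : lo ≤ hi) (p : ℝ × ℝ) : ℝ × ℝ :=
  ((projIcc lo hi h p.1 : ℝ), (projIcc lo hi h p.2 : ℝ))

theorem clampBox_mem (h : lo ≤ hi) (p : ℝ × ℝ) : clampBox h p ∈ Icc lo hi ×ˢ Icc lo hi :=
  ⟨(projIcc lo hi h p.1).2, (projIcc lo hi h p.2).2⟩

theorem clampBox_of_mem (h : lo ≤ hi) {p : ℝ × ℝ} (hp : p ∈ Icc lo hi ×ˢ Icc lo hi) :
    clampBox h p = p := by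
  simp [clampBox, projIcc_of_mem h hp.1, projIcc_of_mem h hp.2]

theorem lipschitzWith_clampBox (h : lo ≤ hi) : LipschitzWith 1 (clampBox h) := by
  have hproj := (LipschitzWith.subtype_val _).comp (LipschitzWith.projIcc h)
  have := (hproj.comp LipschitzWith.prod_fst).prodMk (hproj.comp LipschitzWith.prod_snd)
  simp only [mul_one, max_self] at this
  exact this

theorem exists_isIntegralCurveOn_Ici_comp_clampBox {v : ℝ × ℝ → ℝ × ℝ} (hv : ContDiff ℝ 1 v)
    (h : lo ≤ hi) (x₀ : ℝ × ℝ) :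
    ∃ γ : ℝ → ℝ × ℝ, γ 0 = x₀ ∧ IsIntegralCurveOn γ (fun _ => v ∘ clampBox h) (Ici 0) := by
  have hbox : IsCompact (Icc lo hi ×ˢ Icc lo hi) := isCompact_Icc.prod isCompact_Icc
  obtain ⟨K, hK⟩ := hv.locallyLipschitz.locallyLipschitzOn.exists_lipschitzOnWith_of_compact hbox
  obtain ⟨C, hC⟩ := hbox.exists_bound_of_continuousOn hv.continuous.continuousOn
  have hlip : LipschitzWith (K * 1) (v ∘ clampBox h) := lipschitzOnWith_univ.1 <|
    hK.comp (lipschitzWith_clampBox h).lipschitzOnWith fun p _ => clampBox_mem h p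
  exact exists_isIntegralCurveOn_Ici_of_lipschitzWith hlip (fun p => hC _ (clampBox_mem h p)) x₀

theorem IsIntegralCurveOn.of_comp_clampBox {v : ℝ × ℝ → ℝ × ℝ} (h : lo ≤ hi)
    {γ : ℝ → ℝ × ℝ} {s : Set ℝ} (hγ : IsIntegralCurveOn γ (fun _ => v ∘ clampBox h) s)
    (hs : MapsTo γ s (Icc lo hi ×ˢ Icc lo hi)) : IsIntegralCurveOn γ (fun _ => v) s := by
  intro t ht
  simpa only [Function.comp_apply, clampBox_of_mem h (hs ht)] using hγ t ht

end Clamp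

theorem ContinuousOn.mapsTo_Ici_of_mapsTo_closure {X : Type*} [TopologicalSpace X]
    {γ : ℝ → X} {O : Set X} (hγ : ContinuousOn γ (Ici 0)) (hO : IsOpen O) (h0 : γ 0 ∈ O)
    (h : ∀ T ∈ Ici (0 : ℝ), MapsTo γ (Icc 0 T) (closure O) → γ T ∈ O) :
    MapsTo γ (Ici 0) O := by
  by_contra hexit
  obtain ⟨t₁, ht₁, hbad⟩ := not_forall₂.1 hexit
  set E := sInf (Ici 0 ∩ γ ⁻¹' Oᶜ)
  have hclosed : IsClosed (Ici 0 ∩ γ ⁻¹' Oᶜ) :=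
    hγ.preimage_isClosed_of_isClosed isClosed_Ici hO.isClosed_compl
  have hbdd : BddBelow (Ici 0 ∩ γ ⁻¹' Oᶜ) := ⟨0, fun u hu => hu.1⟩
  have hE : E ∈ Ici 0 ∩ γ ⁻¹' Oᶜ := hclosed.csInf_mem ⟨t₁, ht₁, hbad⟩ hbdd
  have hE0 : 0 < E := lt_of_le_of_ne hE.1 fun h => hE.2 (h ▸ h0)
  have hbefore : MapsTo γ (Ico 0 E) O := fun u hu => by
    by_contra hu'
    exact (csInf_le hbdd ⟨hu.1, hu'⟩).not_gt hu.2
  refine hE.2 (h E hE.1 fun u hu => closure_mono (image_subset_iff.2 hbefore) ?_)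
  refine ((hγ u hu.1).mono Ico_subset_Ici_self).mem_closure_image ?_
  rwa [closure_Ico hE0.ne]

noncomputable def lyapunovTerm (x : ℝ) : ℝ := x - 2 - 2 * log (x / 2)

section lyapunovTerm

variable {x : ℝ}

theorem lyapunovTerm_nonneg (hx : 0 < x) : 0 ≤ lyapunovTerm x := by
  have := log_le_sub_one_of_pos (half_pos hx)
  unfold lyapunovTerm; linarith

theorem lyapunovTerm_le_sq_div (hx : 0 < x) : lyapunovTerm x ≤ (x - 2) ^ 2 / x := by
  have h := one_sub_inv_le_log_of_pos (half_pos hx)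
  rw [inv_div] at h
  have : (x - 2) ^ 2 / x = x - 4 + 2 * (2 / x) := by field_simp; ring
  unfold lyapunovTerm; rw [this]; linarith

theorem two_mul_sqrt_sub_one_sq_le_lyapunovTerm (hx : 0 < x) :
    2 * (√(x / 2) - 1) ^ 2 ≤ lyapunovTerm x := by
  have hr := sqrt_pos.2 (half_pos hx)
  have h := log_le_sub_one_of_pos hr
  rw [log_sqrt (half_pos hx).le] at h
  have hsq := sq_sqrt (half_pos hx).le
  unfold lyapunovTerm; nlinarith

theorem le_two_mul_lyapunovTerm_add_four (hx : 0 < x) : x ≤ 2 * lyapunovTerm x + 4 := by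
  have h := log_le_sub_one_of_pos (show 0 < x / 4 by positivity)
  have h2 := log_le_sub_one_of_pos (show (0:ℝ) < 2 by norm_num)
  have : log (x / 2) = log (x / 4) + log 2 := by
    rw [← log_mul (by positivity) (by norm_num)]; ring_nf
  unfold lyapunovTerm; linarith

theorem exp_le_of_lyapunovTerm (hx : 0 < x) : exp (-(lyapunovTerm x + 2) / 2) ≤ x := by
  rw [← le_log_iff_exp_le hx]
  have h2 : 0 ≤ log 2 := log_nonneg one_le_two
  unfold lyapunovTerm; rw [log_div hx.ne' two_ne_zero]; linarith

theorem hasDerivAt_lyapunovTerm (hx : 0 < x) : HasDerivAt lyapunovTerm ((x - 2) / x) x := by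
  have hlog := ((hasDerivAt_id x).div_const 2).log (half_pos hx).ne'
  refine (((hasDerivAt_id x).sub_const 2).sub (hlog.const_mul 2)).congr_deriv ?_
  simp only [id]
  field_simp

theorem mem_Icc_of_lyapunovTerm_le {x c : ℝ} (hx : 0 < x) (h : lyapunovTerm x ≤ c) :
    x ∈ Icc (exp (-(c + 2) / 2)) (2 * c + 4) :=
  ⟨(exp_le_exp.2 (by linarith)).trans (exp_le_of_lyapunovTerm hx),
    (le_two_mul_lyapunovTerm_add_four hx).trans (by linarith)⟩

theorem tendsto_two_of_tendsto_lyapunovTerm {ι : Type*} {l : Filter ι} {f : ι → ℝ}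
    (hpos : ∀ᶠ i in l, 0 < f i) (h : Tendsto (fun i => lyapunovTerm (f i)) l (𝓝 0)) :
    Tendsto f l (𝓝 2) := by
  have hsq : Tendsto (fun i => (√(f i / 2) - 1) ^ 2) l (𝓝 0) := by
    refine squeeze_zero' (Eventually.of_forall fun i => sq_nonneg _) ?_
      (by simpa using h.div_const 2)
    filter_upwards [hpos] with i hi
    linarith [two_mul_sqrt_sub_one_sq_le_lyapunovTerm hi]
  have hr : Tendsto (fun i => √(f i / 2)) l (𝓝 1) := by
    rw [tendsto_iff_norm_sub_tendsto_zero]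
    simpa [sqrt_sq_eq_abs] using hsq.sqrt
  have hsq' : Tendsto (fun i => 2 * √(f i / 2) ^ 2) l (𝓝 2) := by
    simpa using (hr.pow 2).const_mul 2
  refine hsq'.congr' ?_
  filter_upwards [hpos] with i hi
  rw [sq_sqrt (half_pos hi).le]
  ring

end lyapunovTerm

noncomputable def lyapunov (p : ℝ × ℝ) : ℝ := lyapunovTerm p.1 + lyapunovTerm p.2

def bracketField (p : ℝ × ℝ) : ℝ × ℝ :=
  (-(p.1 * (2 * p.1 - p.2 - 2)), -(p.2 * (-p.1 + 2 * p.2 - 2)))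

def dissipation (p : ℝ × ℝ) : ℝ :=
  2 * (p.1 - 2) ^ 2 - 2 * (p.1 - 2) * (p.2 - 2) + 2 * (p.2 - 2) ^ 2

theorem contDiff_bracketField : ContDiff ℝ 1 bracketField := by
  unfold bracketField; fun_prop

theorem dissipation_nonneg (p : ℝ × ℝ) : 0 ≤ dissipation p := by
  unfold dissipation; nlinarith [sq_nonneg (p.1 - p.2), sq_nonneg (p.1 - 2), sq_nonneg (p.2 - 2)]

theorem lyapunov_nonneg {p : ℝ × ℝ} (hp : 0 < p.1 ∧ 0 < p.2) : 0 ≤ lyapunov p :=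
  add_nonneg (lyapunovTerm_nonneg hp.1) (lyapunovTerm_nonneg hp.2)

theorem mul_lyapunov_le_dissipation {p : ℝ × ℝ} {α : ℝ} (hα : 0 < α) (h₁ : α ≤ p.1)
    (h₂ : α ≤ p.2) : α * lyapunov p ≤ dissipation p := by
  have hle : ∀ x, α ≤ x → α * lyapunovTerm x ≤ (x - 2) ^ 2 := fun x hx => by
    have hx0 := hα.trans_le hx
    calc α * lyapunovTerm x ≤ α * ((x - 2) ^ 2 / x) :=
          mul_le_mul_of_nonneg_left (lyapunovTerm_le_sq_div hx0) hα.le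
      _ ≤ x * ((x - 2) ^ 2 / x) := by gcongr
      _ = (x - 2) ^ 2 := by field_simp
  have := hle _ h₁
  have := hle _ h₂
  unfold lyapunov dissipation
  nlinarith [sq_nonneg (p.1 - p.2)]

theorem hasDerivWithinAt_lyapunov_comp {γ : ℝ → ℝ × ℝ} {s : Set ℝ} {t : ℝ}
    (hγ : HasDerivWithinAt γ (bracketField (γ t)) s t) (hpos : 0 < (γ t).1 ∧ 0 < (γ t).2) :
    HasDerivWithinAt (fun u => lyapunov (γ u)) (-dissipation (γ t)) s t := by
  have h₁ := (hasDerivAt_lyapunovTerm hpos.1).comp_hasDerivWithinAt t hγ.fst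
  have h₂ := (hasDerivAt_lyapunovTerm hpos.2).comp_hasDerivWithinAt t hγ.snd
  refine (h₁.add h₂).congr_deriv ?_
  have := hpos.1.ne'
  have := hpos.2.ne'
  simp only [bracketField, dissipation]
  field_simp
  ring

theorem mem_Icc_prod_of_lyapunov_le {p : ℝ × ℝ} {c : ℝ} (hp : 0 < p.1 ∧ 0 < p.2)
    (h : lyapunov p ≤ c) :
    p ∈ Icc (exp (-(c + 2) / 2)) (2 * c + 4) ×ˢ Icc (exp (-(c + 2) / 2)) (2 * c + 4) := by
  have h₁ := lyapunovTerm_nonneg hp.1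
  have h₂ := lyapunovTerm_nonneg hp.2
  unfold lyapunov at h
  exact ⟨mem_Icc_of_lyapunovTerm_le hp.1 (by linarith),
    mem_Icc_of_lyapunovTerm_le hp.2 (by linarith)⟩

section Trajectory

variable {γ : ℝ → ℝ × ℝ}

theorem antitoneOn_lyapunov_comp {D : Set ℝ} (hD : Convex ℝ D)
    (hγ : IsIntegralCurveOn γ (fun _ => bracketField) D)
    (hpos : ∀ t ∈ D, 0 < (γ t).1 ∧ 0 < (γ t).2) : AntitoneOn (fun t => lyapunov (γ t)) D :=
  hD.antitoneOn_of_hasDerivWithinAt_nonpos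
    (fun t ht => hasDerivWithinAt_lyapunov_comp (hγ t ht) (hpos t ht))
    (fun _ _ => neg_nonpos.2 (dissipation_nonneg _))

theorem pos_of_isIntegralCurveOn_bracketField
    (hγ : IsIntegralCurveOn γ (fun _ => bracketField) (Ici 0))
    (h0 : 0 < (γ 0).1 ∧ 0 < (γ 0).2) : ∀ t ∈ Ici (0 : ℝ), 0 < (γ t).1 ∧ 0 < (γ t).2 := by
  have hc := hγ.continuousOn
  have h₁ : ∀ t ∈ Ici (0 : ℝ), HasDerivWithinAt (fun t => (γ t).1)
      (-(2 * (γ t).1 - (γ t).2 - 2) * (γ t).1) (Ici 0) t := fun t ht =>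
    (HasDerivWithinAt.fst (hγ t ht)).congr_deriv (by simp only [bracketField]; ring)
  have h₂ : ∀ t ∈ Ici (0 : ℝ), HasDerivWithinAt (fun t => (γ t).2)
      (-(-(γ t).1 + 2 * (γ t).2 - 2) * (γ t).2) (Ici 0) t := fun t ht =>
    (HasDerivWithinAt.snd (hγ t ht)).congr_deriv (by simp only [bracketField]; ring)
  exact fun t ht => ⟨pos_of_hasDerivWithinAt_eq_mul_self (by fun_prop) h₁ h0.1 t ht,
    pos_of_hasDerivWithinAt_eq_mul_self (by fun_prop) h₂ h0.2 t ht⟩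

theorem lyapunov_comp_le_mul_exp (hγ : IsIntegralCurveOn γ (fun _ => bracketField) (Ici 0))
    (hpos : ∀ t ∈ Ici (0 : ℝ), 0 < (γ t).1 ∧ 0 < (γ t).2) {t : ℝ} (ht : 0 ≤ t) :
    lyapunov (γ t) ≤ lyapunov (γ 0) * exp (-(exp (-(lyapunov (γ 0) + 2) / 2) * t)) := by
  set c := lyapunov (γ 0)
  set α := exp (-(c + 2) / 2)
  have hanti := antitoneOn_lyapunov_comp (convex_Ici 0) hγ hpos
  have hdiss : ∀ t ∈ Ici (0 : ℝ), α * lyapunov (γ t) ≤ dissipation (γ t) := fun t ht =>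
    have hbox := mem_Icc_prod_of_lyapunov_le (hpos t ht) (hanti self_mem_Ici ht ht)
    mul_lyapunov_le_dissipation (exp_pos _) hbox.1.1 hbox.2.1
  have hW : AntitoneOn (fun t => lyapunov (γ t) * exp (α * t)) (Ici 0) :=
    (convex_Ici 0).antitoneOn_of_hasDerivWithinAt_nonpos
      (fun t ht => (hasDerivWithinAt_lyapunov_comp (hγ t ht) (hpos t ht)).mul
        ((hasDerivAt_id t).const_mul α).exp.hasDerivWithinAt)
      (fun t ht => by
        simp only [id, mul_one]
        nlinarith [mul_le_mul_of_nonneg_left (hdiss t ht) (exp_pos (α * t)).le])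
  have := hW self_mem_Ici ht ht
  simp only [mul_zero, exp_zero, mul_one] at this
  rw [exp_neg, ← div_eq_mul_inv, le_div_iff₀ (exp_pos _)]
  exact this


theorem tendsto_of_isIntegralCurveOn_bracketField
    (hγ : IsIntegralCurveOn γ (fun _ => bracketField) (Ici 0))
    (h0 : 0 < (γ 0).1 ∧ 0 < (γ 0).2) :
    (∀ t ∈ Ici (0 : ℝ), 0 < (γ t).1 ∧ 0 < (γ t).2) ∧ Tendsto γ atTop (𝓝 (2, 2)) := by
  have hpos := pos_of_isIntegralCurveOn_bracketField hγ h0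
  have hpos' : ∀ᶠ t in atTop, 0 < (γ t).1 ∧ 0 < (γ t).2 := eventually_atTop.2 ⟨0, hpos⟩
  set α := exp (-(lyapunov (γ 0) + 2) / 2)
  have hdecay : Tendsto (fun t => lyapunov (γ 0) * exp (-(α * t))) atTop (𝓝 0) := by
    simpa using (tendsto_exp_neg_atTop_nhds_zero.comp
      (tendsto_id.const_mul_atTop (exp_pos _))).const_mul (lyapunov (γ 0))
  have hV : Tendsto (fun t => lyapunov (γ t)) atTop (𝓝 0) :=
    squeeze_zero' (hpos'.mono fun t ht => lyapunov_nonneg ht)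
      (eventually_atTop.2 ⟨0, fun t ht => lyapunov_comp_le_mul_exp hγ hpos ht⟩) hdecay
  have h₁ : Tendsto (fun t => lyapunovTerm (γ t).1) atTop (𝓝 0) :=
    squeeze_zero' (hpos'.mono fun t ht => lyapunovTerm_nonneg ht.1)
      (hpos'.mono fun t ht => le_add_of_nonneg_right (lyapunovTerm_nonneg ht.2)) hV
  have h₂ : Tendsto (fun t => lyapunovTerm (γ t).2) atTop (𝓝 0) :=
    squeeze_zero' (hpos'.mono fun t ht => lyapunovTerm_nonneg ht.2)
      (hpos'.mono fun t ht => le_add_of_nonneg_left (lyapunovTerm_nonneg ht.1)) hV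
  exact ⟨hpos, (tendsto_two_of_tendsto_lyapunovTerm (hpos'.mono fun _ h => h.1) h₁).prodMk_nhds
    (tendsto_two_of_tendsto_lyapunovTerm (hpos'.mono fun _ h => h.2) h₂)⟩

end Trajectory

theorem exists_isIntegralCurveOn_bracketField {x₀ : ℝ × ℝ} (hx₀ : 0 < x₀.1 ∧ 0 < x₀.2) :
    ∃ γ : ℝ → ℝ × ℝ, γ 0 = x₀ ∧ IsIntegralCurveOn γ (fun _ => bracketField) (Ici 0) := by
  set a := exp (-(lyapunov x₀ + 2) / 2)
  set b := 2 * lyapunov x₀ + 4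
  have hx₀ab : x₀ ∈ Icc a b ×ˢ Icc a b := mem_Icc_prod_of_lyapunov_le hx₀ le_rfl
  have ha : 0 < a := exp_pos _
  have hab : a / 2 < b + 1 := by linarith [hx₀ab.1.1, hx₀ab.1.2]
  -- solve the field clamped to a box around the sublevel set `{lyapunov ≤ lyapunov x₀}`
  have hsub : Icc a b ×ˢ Icc a b ⊆ Ioo (a / 2) (b + 1) ×ˢ Ioo (a / 2) (b + 1) :=
    prod_mono (Icc_subset_Ioo (by linarith) (by linarith))
      (Icc_subset_Ioo (by linarith) (by linarith))
  obtain ⟨γ, hγ0, hγ⟩ := exists_isIntegralCurveOn_Ici_comp_clampBox contDiff_bracketField hab.le x₀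
  have hclosure : closure (Ioo (a / 2) (b + 1) ×ˢ Ioo (a / 2) (b + 1)) =
      Icc (a / 2) (b + 1) ×ˢ Icc (a / 2) (b + 1) := by
    rw [closure_prod_eq, closure_Ioo hab.ne]
  have hstay : MapsTo γ (Ici 0) (Ioo (a / 2) (b + 1) ×ˢ Ioo (a / 2) (b + 1)) := by
    refine hγ.continuousOn.mapsTo_Ici_of_mapsTo_closure (isOpen_Ioo.prod isOpen_Ioo)
      (hγ0 ▸ hsub hx₀ab) fun T hT hbox => hsub ?_
    rw [hclosure] at hbox
    -- as long as `γ` stays in the box it solves the true equation, so `lyapunov` decreases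
    have hγT := (hγ.mono (Icc_subset_Ici_self)).of_comp_clampBox hab.le hbox
    have hposT : ∀ t ∈ Icc 0 T, 0 < (γ t).1 ∧ 0 < (γ t).2 := fun t ht =>
      ⟨by linarith [(hbox ht).1.1], by linarith [(hbox ht).2.1]⟩
    refine mem_Icc_prod_of_lyapunov_le (hposT T ⟨hT, le_rfl⟩) ?_
    rw [← hγ0]
    exact antitoneOn_lyapunov_comp (convex_Icc 0 T) hγT hposT ⟨le_rfl, hT⟩ ⟨hT, le_rfl⟩ hT
  exact ⟨γ, hγ0, hγ.of_comp_clampBox hab.le fun t ht =>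
    prod_mono Ioo_subset_Icc_self Ioo_subset_Icc_self (hstay ht)⟩

/-- Consider the planar system
`s₁' = -s₁ (2s₁ - s₂ - 2)`, `s₂' = -s₂ (-s₁ + 2s₂ - 2)` on the open quadrant
`(0,∞)²`.  For every initial condition in `(0,∞)²` the maximal solution is
defined for all `t ≥ 0`, remains in `(0,∞)²`, and converges to the
equilibrium `(2, 2)` as `t → ∞`: there exists a global solution with these
properties, and every solution defined for all `t ≥ 0` has them. -/
theorem stmt16
    (x₁ x₂ : ℝ) (hx₁ : 0 < x₁) (hx₂ : 0 < x₂) :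
    (∃ s₁ s₂ : ℝ → ℝ, s₁ 0 = x₁ ∧ s₂ 0 = x₂ ∧
      (∀ t ∈ Set.Ici (0:ℝ),
        HasDerivWithinAt s₁ (-(s₁ t * (2 * s₁ t - s₂ t - 2))) (Set.Ici 0) t ∧
        HasDerivWithinAt s₂ (-(s₂ t * (-s₁ t + 2 * s₂ t - 2))) (Set.Ici 0) t) ∧
      (∀ t ∈ Set.Ici (0:ℝ), 0 < s₁ t ∧ 0 < s₂ t) ∧
      Filter.Tendsto s₁ Filter.atTop (nhds 2) ∧
      Filter.Tendsto s₂ Filter.atTop (nhds 2))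
    ∧ ∀ s₁ s₂ : ℝ → ℝ, s₁ 0 = x₁ → s₂ 0 = x₂ →
      (∀ t ∈ Set.Ici (0:ℝ),
        HasDerivWithinAt s₁ (-(s₁ t * (2 * s₁ t - s₂ t - 2))) (Set.Ici 0) t ∧
        HasDerivWithinAt s₂ (-(s₂ t * (-s₁ t + 2 * s₂ t - 2))) (Set.Ici 0) t) →
      ((∀ t ∈ Set.Ici (0:ℝ), 0 < s₁ t ∧ 0 < s₂ t) ∧
        Filter.Tendsto s₁ Filter.atTop (nhds 2) ∧
        Filter.Tendsto s₂ Filter.atTop (nhds 2)) := by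
  refine ⟨?_, fun s₁ s₂ h₁ h₂ hs => ?_⟩
  · obtain ⟨γ, hγ0, hγ⟩ := exists_isIntegralCurveOn_bracketField (x₀ := (x₁, x₂)) ⟨hx₁, hx₂⟩
    obtain ⟨hpos, hlim⟩ := tendsto_of_isIntegralCurveOn_bracketField hγ (hγ0 ▸ ⟨hx₁, hx₂⟩)
    exact ⟨_, _, by rw [hγ0], by rw [hγ0], fun t ht => ⟨(hγ t ht).fst, (hγ t ht).snd⟩, hpos,
      hlim.fst_nhds, hlim.snd_nhds⟩
  · have hγ : IsIntegralCurveOn (fun t => (s₁ t, s₂ t)) (fun _ => bracketField) (Ici 0) :=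
      fun t ht => (hs t ht).1.prodMk (hs t ht).2
    obtain ⟨hpos, hlim⟩ := tendsto_of_isIntegralCurveOn_bracketField hγ (by simp [h₁, h₂, hx₁, hx₂])
    exact ⟨hpos, hlim.fst_nhds, hlim.snd_nhds⟩
end

section
/- Consider the planar system s_1′ = −s_1(3s_1 − 3), s_2′ = −s_2(2s_1 + s_2 − 1) on the open quadrant (0,∞)². For every initial condition s(0) ∈ (0,∞)², the maximal solution is defined for all t ≥ 0, remains in (0,∞)², and converges to the boundary equilibrium point (1, 0) as t → ∞. -/
/-!
The first equation is logistic, with explicit solution `x / (x + (1 - x) e^{-3t})`. Given `s₁`,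
the second is a Bernoulli equation: `u = 1 / s₂` solves the linear equation
`u' = (2 s₁ - 1) u + 1`, whose integrating factor is `e^t (x + (1 - x) e^{-3t})^{2/3}`. This gives
an explicit global solution, positive because `u` is, and `u → ∞` since the integrating factor
does. Every other solution on `[0, ∞)` coincides with it, the vector field being polynomial and
hence locally Lipschitz.
-/

open Real Set Filter Topology

theorem ODE_solution_unique_Ici_of_locallyLipschitz {E : Type*} [NormedAddCommGroup E]
    [NormedSpace ℝ E] {v : E → E} (hv : LocallyLipschitz v) {f g : ℝ → E} {a : ℝ}
    (hf : ∀ t ∈ Ici a, HasDerivWithinAt f (v (f t)) (Ici a) t)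
    (hg : ∀ t ∈ Ici a, HasDerivWithinAt g (v (g t)) (Ici a) t) (ha : f a = g a) :
    EqOn f g (Ici a) := by
  intro b hb
  have hfc : ContinuousOn f (Icc a b) := fun t ht ↦
    (hf t ht.1).continuousWithinAt.mono Icc_subset_Ici_self
  have hgc : ContinuousOn g (Icc a b) := fun t ht ↦
    (hg t ht.1).continuousWithinAt.mono Icc_subset_Ici_self
  obtain ⟨K, hK⟩ := hv.locallyLipschitzOn.exists_lipschitzOnWith_of_compact
    ((isCompact_Icc.image_of_continuousOn hfc).union (isCompact_Icc.image_of_continuousOn hgc))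
  exact ODE_solution_unique_of_mem_Icc_right (v := fun _ ↦ v) (fun _ _ ↦ hK) hfc
    (fun t ht ↦ (hf t ht.1).mono (Ici_subset_Ici.2 ht.1))
    (fun t ht ↦ .inl (mem_image_of_mem f (Ico_subset_Icc_self ht))) hgc
    (fun t ht ↦ (hg t ht.1).mono (Ici_subset_Ici.2 ht.1))
    (fun t ht ↦ .inr (mem_image_of_mem g (Ico_subset_Icc_self ht))) ha ⟨hb, le_rfl⟩

theorem hasDerivAt_integral_of_continuousOn {f : ℝ → ℝ} {U : Set ℝ} (hU : IsOpen U)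
    (hf : ContinuousOn f U) {a b : ℝ} (hab : uIcc a b ⊆ U) :
    HasDerivAt (fun u ↦ ∫ x in a..u, f x) (f b) b :=
  have hb : b ∈ U := hab right_mem_uIcc
  intervalIntegral.integral_hasDerivAt_right (hf.mono hab).intervalIntegrable
    (hf.stronglyMeasurableAtFilter hU b hb) (hf.continuousAt (hU.mem_nhds hb))

section Bernoulli

variable {φ : ℝ → ℝ} {a c t : ℝ}

theorem HasDerivAt.mul_const_add_integral_inv (hφ : HasDerivAt φ (a * φ t) t) (hφt : φ t ≠ 0)
    (hI : HasDerivAt (fun u ↦ ∫ r in (0:ℝ)..u, (φ r)⁻¹) (φ t)⁻¹ t) :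
    HasDerivAt (fun u ↦ φ u * (c + ∫ r in (0:ℝ)..u, (φ r)⁻¹))
      (a * (φ t * (c + ∫ r in (0:ℝ)..t, (φ r)⁻¹)) + 1) t :=
  (hφ.mul (hI.const_add c)).congr_deriv (by field_simp)

theorem HasDerivAt.inv_of_hasDerivAt_mul_add_one {u : ℝ → ℝ} (hu : HasDerivAt u (a * u t + 1) t)
    (ht : u t ≠ 0) : HasDerivAt (fun s ↦ (u s)⁻¹) (-((u t)⁻¹ * (a + (u t)⁻¹))) t :=
  (hu.inv ht).congr_deriv (by field_simp)

end Bernoulli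

noncomputable section

namespace QuadrantFlow

variable {x y t : ℝ}

def logisticDen (x t : ℝ) : ℝ := x + (1 - x) * exp (-3 * t)

def sol₁ (x t : ℝ) : ℝ := x / logisticDen x t

def intFactor (x t : ℝ) : ℝ := exp t * logisticDen x t ^ (2 / 3 : ℝ)

def invSol₂ (x y t : ℝ) : ℝ := intFactor x t * (y⁻¹ + ∫ r in (0:ℝ)..t, (intFactor x r)⁻¹)

def sol₂ (x y t : ℝ) : ℝ := (invSol₂ x y t)⁻¹

theorem logisticDen_pos (hx : 0 < x) (ht : 0 ≤ t) : 0 < logisticDen x t := by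
  have h₀ : 0 < exp (-3 * t) := exp_pos _
  have h₁ : exp (-3 * t) ≤ 1 := exp_le_one_iff.2 (by linarith)
  -- a convex combination of `x` and `1`
  unfold logisticDen
  nlinarith

theorem continuous_logisticDen : Continuous (logisticDen x) := by
  unfold logisticDen; fun_prop

theorem hasDerivAt_logisticDen : HasDerivAt (logisticDen x) (3 * (x - logisticDen x t)) t := by
  have := (((hasDerivAt_id t).const_mul (-3)).exp.const_mul (1 - x)).const_add x
  exact this.congr_deriv (by simp only [logisticDen, id]; ring)

theorem tendsto_logisticDen : Tendsto (logisticDen x) atTop (𝓝 x) := by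
  have h : Tendsto (fun t : ℝ ↦ exp (-3 * t)) atTop (𝓝 0) :=
    tendsto_exp_atBot.comp (tendsto_id.const_mul_atTop_of_neg (by norm_num))
  have := (h.const_mul (1 - x)).const_add x
  rwa [mul_zero, add_zero] at this

theorem sol₁_zero : sol₁ x 0 = x := by simp [sol₁, logisticDen]

theorem sol₁_pos (hx : 0 < x) (ht : 0 ≤ t) : 0 < sol₁ x t :=
  div_pos hx (logisticDen_pos hx ht)

theorem hasDerivAt_sol₁ (hx : 0 < x) (ht : 0 ≤ t) :
    HasDerivAt (sol₁ x) (-(sol₁ x t * (3 * sol₁ x t - 3))) t := by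
  have hD := (logisticDen_pos hx ht).ne'
  refine ((hasDerivAt_const t x).div hasDerivAt_logisticDen hD).congr_deriv ?_
  simp only [sol₁]
  field_simp
  ring

theorem tendsto_sol₁ (hx : 0 < x) : Tendsto (sol₁ x) atTop (𝓝 1) := by
  have := (tendsto_const_nhds (x := x)).div tendsto_logisticDen hx.ne'
  rwa [div_self hx.ne'] at this

theorem intFactor_pos (h : 0 < logisticDen x t) : 0 < intFactor x t :=
  mul_pos (exp_pos t) (rpow_pos_of_pos h _)

theorem hasDerivAt_intFactor (h : 0 < logisticDen x t) :
    HasDerivAt (intFactor x) ((2 * sol₁ x t - 1) * intFactor x t) t := by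
  refine ((hasDerivAt_exp t).mul (hasDerivAt_logisticDen.rpow_const (.inl h.ne'))).congr_deriv ?_
  rw [rpow_sub h, rpow_one]
  simp only [intFactor, sol₁]
  field_simp
  ring

theorem tendsto_intFactor (hx : 0 < x) : Tendsto (intFactor x) atTop atTop :=
  tendsto_exp_atTop.atTop_mul_pos (rpow_pos_of_pos hx _)
    (tendsto_logisticDen.rpow_const (.inl hx.ne'))

theorem integral_inv_intFactor_nonneg (hx : 0 < x) (ht : 0 ≤ t) :
    0 ≤ ∫ r in (0:ℝ)..t, (intFactor x r)⁻¹ :=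
  intervalIntegral.integral_nonneg ht fun _ hr ↦
    (inv_pos.2 (intFactor_pos (logisticDen_pos hx hr.1))).le

theorem invSol₂_pos (hx : 0 < x) (hy : 0 < y) (ht : 0 ≤ t) : 0 < invSol₂ x y t :=
  mul_pos (intFactor_pos (logisticDen_pos hx ht))
    (add_pos_of_pos_of_nonneg (inv_pos.2 hy) (integral_inv_intFactor_nonneg hx ht))

theorem hasDerivAt_invSol₂ (hx : 0 < x) (ht : 0 ≤ t) :
    HasDerivAt (invSol₂ x y) ((2 * sol₁ x t - 1) * invSol₂ x y t + 1) t := by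
  -- for `x > 1` the denominator vanishes at some negative time, so the FTC is applied on the open
  -- set where it is positive
  have hU : IsOpen {r | 0 < logisticDen x r} := isOpen_lt continuous_const continuous_logisticDen
  have hcont : ContinuousOn (fun r ↦ (intFactor x r)⁻¹) {r | 0 < logisticDen x r} :=
    fun r hr ↦ ((hasDerivAt_intFactor hr).continuousAt.inv₀ (intFactor_pos hr).ne').continuousWithinAt
  have hsub : uIcc 0 t ⊆ {r | 0 < logisticDen x r} := by
    rw [uIcc_of_le ht]
    exact fun r hr ↦ logisticDen_pos hx hr.1
  have hD := logisticDen_pos hx ht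
  exact (hasDerivAt_intFactor hD).mul_const_add_integral_inv (intFactor_pos hD).ne'
    (hasDerivAt_integral_of_continuousOn hU hcont hsub)

theorem sol₂_zero : sol₂ x y 0 = y := by
  simp [sol₂, invSol₂, intFactor, logisticDen]

theorem sol₂_pos (hx : 0 < x) (hy : 0 < y) (ht : 0 ≤ t) : 0 < sol₂ x y t :=
  inv_pos.2 (invSol₂_pos hx hy ht)

theorem hasDerivAt_sol₂ (hx : 0 < x) (hy : 0 < y) (ht : 0 ≤ t) :
    HasDerivAt (sol₂ x y) (-(sol₂ x y t * (2 * sol₁ x t + sol₂ x y t - 1))) t :=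
  ((hasDerivAt_invSol₂ hx ht).inv_of_hasDerivAt_mul_add_one (invSol₂_pos hx hy ht).ne').congr_deriv
    (by simp only [sol₂]; ring)

theorem tendsto_sol₂ (hx : 0 < x) (hy : 0 < y) : Tendsto (sol₂ x y) atTop (𝓝 0) := by
  refine Tendsto.inv_tendsto_atTop (tendsto_atTop_mono' _ ?_
    ((tendsto_intFactor hx).atTop_mul_const (inv_pos.2 hy)))
  filter_upwards [eventually_ge_atTop 0] with t ht
  exact mul_le_mul_of_nonneg_left (le_add_of_nonneg_right (integral_inv_intFactor_nonneg hx ht))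
    (intFactor_pos (logisticDen_pos hx ht)).le

def vectorField (p : ℝ × ℝ) : ℝ × ℝ := (-(p.1 * (3 * p.1 - 3)), -(p.2 * (2 * p.1 + p.2 - 1)))

theorem eqOn_sol (hx : 0 < x) (hy : 0 < y) {s₁ s₂ : ℝ → ℝ} (h₁ : s₁ 0 = x) (h₂ : s₂ 0 = y)
    (hs : ∀ t ∈ Ici (0:ℝ), HasDerivWithinAt s₁ (-(s₁ t * (3 * s₁ t - 3))) (Ici 0) t ∧
      HasDerivWithinAt s₂ (-(s₂ t * (2 * s₁ t + s₂ t - 1))) (Ici 0) t) :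
    EqOn s₁ (sol₁ x) (Ici 0) ∧ EqOn s₂ (sol₂ x y) (Ici 0) := by
  have hfield : LocallyLipschitz vectorField := ContDiff.locallyLipschitz (𝕂 := ℝ) (by unfold vectorField; fun_prop)
  have h := ODE_solution_unique_Ici_of_locallyLipschitz hfield
    (f := fun t ↦ (s₁ t, s₂ t)) (g := fun t ↦ (sol₁ x t, sol₂ x y t))
    (fun t ht ↦ (hs t ht).1.prodMk (hs t ht).2)
    (fun t ht ↦ (hasDerivAt_sol₁ hx ht).hasDerivWithinAt.prodMk
      (hasDerivAt_sol₂ hx hy ht).hasDerivWithinAt)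
    (by simp [h₁, h₂, sol₁_zero, sol₂_zero])
  exact ⟨fun t ht ↦ congrArg Prod.fst (h ht), fun t ht ↦ congrArg Prod.snd (h ht)⟩

end QuadrantFlow

end

open QuadrantFlow in
/-- Consider the planar system
`s₁' = -s₁ (3s₁ - 3)`, `s₂' = -s₂ (2s₁ + s₂ - 1)` on the open quadrant
`(0,∞)²`.  For every initial condition in `(0,∞)²` the maximal solution is
defined for all `t ≥ 0`, remains in `(0,∞)²`, and converges to the boundary
equilibrium `(1, 0)` as `t → ∞`: there exists a global solution with these
properties, and every solution defined for all `t ≥ 0` has them. -/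
theorem stmt17
    (x₁ x₂ : ℝ) (hx₁ : 0 < x₁) (hx₂ : 0 < x₂) :
    (∃ s₁ s₂ : ℝ → ℝ, s₁ 0 = x₁ ∧ s₂ 0 = x₂ ∧
      (∀ t ∈ Set.Ici (0:ℝ),
        HasDerivWithinAt s₁ (-(s₁ t * (3 * s₁ t - 3))) (Set.Ici 0) t ∧
        HasDerivWithinAt s₂ (-(s₂ t * (2 * s₁ t + s₂ t - 1))) (Set.Ici 0) t) ∧
      (∀ t ∈ Set.Ici (0:ℝ), 0 < s₁ t ∧ 0 < s₂ t) ∧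
      Filter.Tendsto s₁ Filter.atTop (nhds 1) ∧
      Filter.Tendsto s₂ Filter.atTop (nhds 0))
    ∧ ∀ s₁ s₂ : ℝ → ℝ, s₁ 0 = x₁ → s₂ 0 = x₂ →
      (∀ t ∈ Set.Ici (0:ℝ),
        HasDerivWithinAt s₁ (-(s₁ t * (3 * s₁ t - 3))) (Set.Ici 0) t ∧
        HasDerivWithinAt s₂ (-(s₂ t * (2 * s₁ t + s₂ t - 1))) (Set.Ici 0) t) →
      ((∀ t ∈ Set.Ici (0:ℝ), 0 < s₁ t ∧ 0 < s₂ t) ∧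
        Filter.Tendsto s₁ Filter.atTop (nhds 1) ∧
        Filter.Tendsto s₂ Filter.atTop (nhds 0)) := by
  have hpos : ∀ t ∈ Ici (0:ℝ), 0 < sol₁ x₁ t ∧ 0 < sol₂ x₁ x₂ t :=
    fun t ht ↦ ⟨sol₁_pos hx₁ ht, sol₂_pos hx₁ hx₂ ht⟩
  refine ⟨⟨sol₁ x₁, sol₂ x₁ x₂, sol₁_zero, sol₂_zero, fun t ht ↦
    ⟨(hasDerivAt_sol₁ hx₁ ht).hasDerivWithinAt, (hasDerivAt_sol₂ hx₁ hx₂ ht).hasDerivWithinAt⟩,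
    hpos, tendsto_sol₁ hx₁, tendsto_sol₂ hx₁ hx₂⟩, fun s₁ s₂ h₁ h₂ hs ↦ ?_⟩
  obtain ⟨heq₁, heq₂⟩ := eqOn_sol hx₁ hx₂ h₁ h₂ hs
  refine ⟨fun t ht ↦ heq₁ ht ▸ heq₂ ht ▸ hpos t ht, ?_, ?_⟩
  · exact (tendsto_sol₁ hx₁).congr' (heq₁.eventuallyEq_of_mem (Ici_mem_atTop 0)).symm
  · exact (tendsto_sol₂ hx₁ hx₂).congr' (heq₂.eventuallyEq_of_mem (Ici_mem_atTop 0)).symm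
end
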